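/- arXiv:1411.4951 — 10 statements merged into one kernel-verified Lean document; each statement's English description precedes it below -/
import Mathlib

section
/- Let ψ: ℂ → ℝ be continuous and let 𝔭 = (p₁,…,p_ℓ) and 𝔮 = (q₁,…,q_ℓ) be two ℓ-tuples of distinct points of ℂ. Then 𝓕_ψ(𝔭) = ((z−p₁)⋯(z−p_ℓ))/((z−q₁)⋯(z−q_ℓ)) · 𝓕_ψ(𝔮); precisely, an entire function f belongs to 𝓕_ψ(𝔭) if and only if there exists g ∈ 𝓕_ψ(𝔮) with f(z)·(z−q₁)⋯(z−q_ℓ) = g(z)·(z−p₁)⋯(z−p_ℓ) for all z ∈ ℂ. -/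
open MeasureTheory Filter ENNReal

/-! Dividing out the zeros writes `f = h · ∏ (z - pᵢ)` with `h` entire, and the only candidate is
`g = h · ∏ (z - qᵢ)`. Both integrands are continuous, and outside a compact set
`∏ |z - qᵢ| ≤ 2^ℓ ∏ |z - pᵢ|` (and vice versa), so the two weighted `L²` norms are finite together. -/

theorem Differentiable.exists_eq_mul_prod_sub {f : ℂ → ℂ} (hf : Differentiable ℂ f)
    (s : Finset ℂ) (hs : ∀ a ∈ s, f a = 0) :
    ∃ h : ℂ → ℂ, Differentiable ℂ h ∧ ∀ z, f z = h z * ∏ a ∈ s, (z - a) := by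
  classical
  induction s using Finset.induction_on generalizing f with
  | empty => exact ⟨f, hf, fun z => by simp⟩
  | insert a s ha ih =>
    have hdslope : Differentiable ℂ (dslope f a) := by
      rw [← differentiableOn_univ] at hf ⊢
      exact (Complex.differentiableOn_dslope univ_mem).2 hf
    have hfa : f a = 0 := hs a (Finset.mem_insert_self a s)
    have hdslope_zero : ∀ b ∈ s, dslope f a b = 0 := fun b hb => by
      have hba : b ≠ a := ne_of_mem_of_not_mem hb ha
      rw [dslope_of_ne f hba, slope_def_field, hs b (Finset.mem_insert_of_mem hb), hfa,
        sub_zero, zero_div]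
    obtain ⟨h, hh, heq⟩ := ih hdslope hdslope_zero
    refine ⟨h, hh, fun z => ?_⟩
    have hf_eq : f z = (z - a) * dslope f a z := by
      rw [← smul_eq_mul, sub_smul_dslope f a z, hfa, sub_zero]
    rw [hf_eq, heq z, Finset.prod_insert ha]
    ring

theorem Differentiable.exists_eq_mul_prod_sub_of_injective {ι : Type*} [Fintype ι]
    {f : ℂ → ℂ} (hf : Differentiable ℂ f) {p : ι → ℂ} (hp : Function.Injective p)
    (hfp : ∀ i, f (p i) = 0) :
    ∃ h : ℂ → ℂ, Differentiable ℂ h ∧ f = fun z => h z * ∏ i, (z - p i) := by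
  classical
  obtain ⟨h, hh, heq⟩ := hf.exists_eq_mul_prod_sub (Finset.univ.image p) (by simpa using hfp)
  exact ⟨h, hh, funext fun z => by rw [heq z, Finset.prod_image hp.injOn]⟩

theorem eq_of_mul_prod_sub_eq {ι : Type*} [Fintype ι] {f g : ℂ → ℂ} (hf : Continuous f)
    (hg : Continuous g) (q : ι → ℂ) (hfg : ∀ z, f z * ∏ i, (z - q i) = g z * ∏ i, (z - q i)) :
    f = g := by
  refine hf.ext_on ((Set.finite_range q).countable.dense_compl ℂ) hg fun z hz => ?_
  have hprod : ∏ i, (z - q i) ≠ 0 :=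
    Finset.prod_ne_zero_iff.2 fun i _ h => hz ⟨i, (sub_eq_zero.1 h).symm⟩
  exact mul_right_cancel₀ hprod (hfg z)

theorem eventually_norm_prod_sub_le {ι : Type*} [Fintype ι] (p q : ι → ℂ) :
    ∀ᶠ z in cocompact ℂ, ‖∏ i, (z - q i)‖ ≤ 2 ^ Fintype.card ι * ‖∏ i, (z - p i)‖ := by
  have hfactor : ∀ i, ∀ᶠ z in cocompact ℂ, ‖z - q i‖ ≤ 2 * ‖z - p i‖ := fun i => by
    filter_upwards [tendsto_norm_cocompact_atTop.eventually_ge_atTop (2 * ‖p i‖ + ‖q i‖)]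
      with z hz
    have hq := norm_sub_le z (q i)
    have hp := norm_sub_norm_le z (p i)
    linarith
  filter_upwards [eventually_all.2 hfactor] with z hz
  rw [norm_prod, norm_prod, ← Finset.card_univ, ← Finset.prod_const, ← Finset.prod_mul_distrib]
  exact Finset.prod_le_prod (fun i _ => norm_nonneg _) fun i _ => hz i

theorem lintegral_ofReal_lt_top_of_eventually_le {X : Type*} [TopologicalSpace X] [T2Space X]
    [MeasurableSpace X] [OpensMeasurableSpace X] {μ : Measure X} [IsFiniteMeasureOnCompacts μ]
    {F G : X → ℝ} (hF : Continuous F) {c : ℝ} (hc : 0 ≤ c)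
    (hFG : ∀ᶠ x in cocompact X, F x ≤ c * G x) (hG : ∫⁻ x, ENNReal.ofReal (G x) ∂μ < ∞) :
    ∫⁻ x, ENNReal.ofReal (F x) ∂μ < ∞ := by
  obtain ⟨K, hK, hKFG⟩ := mem_cocompact.1 hFG
  obtain ⟨C, hC⟩ := hK.exists_bound_of_continuousOn hF.continuousOn
  have hbound : ∀ x, ENNReal.ofReal (F x) ≤
      K.indicator (fun _ => ENNReal.ofReal C) x + ENNReal.ofReal c * ENNReal.ofReal (G x) := by
    intro x
    by_cases hx : x ∈ K
    · rw [Set.indicator_of_mem hx]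
      exact le_add_right (ENNReal.ofReal_le_ofReal ((le_abs_self _).trans (hC x hx)))
    · rw [Set.indicator_of_notMem hx, zero_add, ← ENNReal.ofReal_mul hc]
      exact ENNReal.ofReal_le_ofReal (hKFG hx)
  calc ∫⁻ x, ENNReal.ofReal (F x) ∂μ
      ≤ ∫⁻ x, K.indicator (fun _ => ENNReal.ofReal C) x
          + ENNReal.ofReal c * ENNReal.ofReal (G x) ∂μ := lintegral_mono hbound
    _ = ENNReal.ofReal C * μ K + ENNReal.ofReal c * ∫⁻ x, ENNReal.ofReal (G x) ∂μ := by
      rw [lintegral_add_left (measurable_const.indicator hK.measurableSet),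
        lintegral_indicator_const hK.measurableSet,
        lintegral_const_mul' _ _ ENNReal.ofReal_ne_top]
    _ < ∞ := add_lt_top.2 ⟨mul_lt_top ofReal_lt_top hK.measure_lt_top,
        mul_lt_top ofReal_lt_top hG⟩

noncomputable def fockNormSq (ψ : ℂ → ℝ) (f : ℂ → ℂ) : ℝ≥0∞ :=
  ∫⁻ z, ENNReal.ofReal (‖f z‖ ^ 2 * Real.exp (-2 * ψ z))

theorem fockNormSq_mul_prod_sub_lt_top {ι : Type*} [Fintype ι] {ψ : ℂ → ℝ} (hψ : Continuous ψ)
    {h : ℂ → ℂ} (hh : Continuous h) (p q : ι → ℂ)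
    (hp : fockNormSq ψ (fun z => h z * ∏ i, (z - p i)) < ∞) :
    fockNormSq ψ (fun z => h z * ∏ i, (z - q i)) < ∞ := by
  refine lintegral_ofReal_lt_top_of_eventually_le (by fun_prop)
    (sq_nonneg (2 ^ Fintype.card ι : ℝ)) ?_ hp
  filter_upwards [eventually_norm_prod_sub_le p q] with z hz
  simp only [norm_mul, mul_pow]
  calc ‖h z‖ ^ 2 * ‖∏ i, (z - q i)‖ ^ 2 * Real.exp (-2 * ψ z)
      ≤ ‖h z‖ ^ 2 * (2 ^ Fintype.card ι * ‖∏ i, (z - p i)‖) ^ 2 * Real.exp (-2 * ψ z) := by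
        gcongr
    _ = _ := by ring

/-- For continuous `ψ : ℂ → ℝ` and two `ℓ`-tuples `p`, `q` of distinct points
of `ℂ`, an entire function `f` belongs to the Palm subspace `𝓕_ψ(p)` of the generalized
Fock space if and only if there is `g ∈ 𝓕_ψ(q)` with
`f z * ∏ (z - q i) = g z * ∏ (z - p i)` for all `z`. -/
theorem stmt0 (ψ : ℂ → ℝ) (hψ : Continuous ψ) (ℓ : ℕ) (p q : Fin ℓ → ℂ)
    (hp : Function.Injective p) (hq : Function.Injective q)
    (f : ℂ → ℂ) (hf : Differentiable ℂ f) :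
    ((∫⁻ z : ℂ, ENNReal.ofReal (‖f z‖ ^ 2 * Real.exp (-2 * ψ z))) < ⊤ ∧
      ∀ i, f (p i) = 0) ↔
    (∃ g : ℂ → ℂ, Differentiable ℂ g ∧
      (∫⁻ z : ℂ, ENNReal.ofReal (‖g z‖ ^ 2 * Real.exp (-2 * ψ z))) < ⊤ ∧
      (∀ i, g (q i) = 0) ∧
      ∀ z : ℂ, f z * ∏ i, (z - q i) = g z * ∏ i, (z - p i)) := by
  have hprod : ∀ r : Fin ℓ → ℂ, Differentiable ℂ fun z => ∏ i, (z - r i) := fun r => by fun_prop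
  have hvanish : ∀ (h : ℂ → ℂ) (r : Fin ℓ → ℂ) i, h (r i) * ∏ j, (r i - r j) = 0 :=
    fun h r i => mul_eq_zero_of_right _ (Finset.prod_eq_zero (Finset.mem_univ i) (sub_self _))
  constructor
  · rintro ⟨hfin, hfp⟩
    obtain ⟨h, hh, rfl⟩ := hf.exists_eq_mul_prod_sub_of_injective hp hfp
    exact ⟨fun z => h z * ∏ i, (z - q i), hh.mul (hprod q),
      fockNormSq_mul_prod_sub_lt_top hψ hh.continuous p q hfin, hvanish h q,
      fun z => mul_right_comm _ _ _⟩
  · rintro ⟨g, hg, hgfin, hgq, hfg⟩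
    obtain ⟨h, hh, rfl⟩ := hg.exists_eq_mul_prod_sub_of_injective hq hgq
    obtain rfl : f = fun z => h z * ∏ i, (z - p i) :=
      eq_of_mul_prod_sub_eq hf.continuous (hh.mul (hprod p)).continuous q fun z => by
        rw [hfg z, mul_right_comm]
    exact ⟨fockNormSq_mul_prod_sub_lt_top hψ hh.continuous q p hgfin, hvanish h p⟩
end

section
/- Let ω: 𝔻 → (0,∞) be a Lebesgue-integrable weight, let ℓ, k ≥ 0, and let 𝔭 = (p₁,…,p_ℓ) ∈ 𝔻^ℓ and 𝔮 = (q₁,…,q_k) ∈ 𝔻^k be tuples of distinct points of 𝔻. Then 𝓑_ω(𝔭) = b_𝔭 · b_𝔮^{−1} · 𝓑_ω(𝔮); precisely, a holomorphic function f on 𝔻 belongs to 𝓑_ω(𝔭) if and only if there exists g ∈ 𝓑_ω(𝔮) with f(z)·b_𝔮(z) = g(z)·b_𝔭(z) for all z ∈ 𝔻. In particular (taking k = 0), 𝓑_ω(𝔭) = b_𝔭 · 𝓑_ω. -/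
/-!
If `f` is holomorphic on `𝔻` and `f a = 0`, then `f = h · φ_a` with `φ_a` the Blaschke factor at
`a` and `h` holomorphic. The quotient `h` stays in `L²(ω dλ)`: near `a` it is bounded and `ω` is
integrable, while away from `a` the factor `|φ_a|` is bounded below. Dividing out the distinct
zeros one at a time gives `𝓑_ω(𝔭) = b_𝔭 · 𝓑_ω`. Since `|b_𝔮| ≤ 1` on `𝔻`, and a Blaschke product
can be cancelled from an identity of continuous functions because its zero set is finite, both
sides of the claimed equivalence describe `b_𝔭 · 𝓑_ω`.
-/

open MeasureTheory Set ComplexConjugate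

local notation "𝔻" => Metric.ball (0 : ℂ) 1

lemma ContinuousOn.aestronglyMeasurable_of_ae_mem {α β : Type*} [MeasurableSpace α]
    [TopologicalSpace α] [OpensMeasurableSpace α] [TopologicalSpace β]
    [TopologicalSpace.PseudoMetrizableSpace β] [SecondCountableTopologyEither α β]
    {μ : Measure α} {s : Set α} {f : α → β} (hf : ContinuousOn f s) (hs : MeasurableSet s)
    (hμ : ∀ᵐ x ∂μ, x ∈ s) : AEStronglyMeasurable f μ := by
  simpa only [Measure.restrict_eq_self_of_ae_mem hμ] using hf.aestronglyMeasurable (μ := μ) hs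

namespace Complex

noncomputable def blaschkeFactor (a z : ℂ) : ℂ := (z - a) / (1 - conj a * z)

noncomputable def blaschkeProduct (S : Finset ℂ) (z : ℂ) : ℂ := ∏ a ∈ S, blaschkeFactor a z

section BlaschkeFactor

variable {a z : ℂ}

lemma one_sub_conj_mul_ne_zero (ha : a ∈ 𝔻) (hz : z ∈ 𝔻) : 1 - conj a * z ≠ 0 := by
  rw [mem_ball_zero_iff] at ha hz
  refine sub_ne_zero.2 fun h => ?_
  have : ‖conj a * z‖ < 1 := by
    rw [norm_mul, norm_conj]
    nlinarith [norm_nonneg a, norm_nonneg z]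
  rw [← h, norm_one] at this
  exact this.false

lemma norm_one_sub_conj_mul_le_two (ha : a ∈ 𝔻) (hz : z ∈ 𝔻) : ‖1 - conj a * z‖ ≤ 2 := by
  rw [mem_ball_zero_iff] at ha hz
  calc ‖1 - conj a * z‖ ≤ ‖(1 : ℂ)‖ + ‖conj a * z‖ := norm_sub_le _ _
    _ ≤ 2 := by
      rw [norm_one, norm_mul, norm_conj]
      nlinarith [norm_nonneg a, norm_nonneg z]

lemma normSq_one_sub_conj_mul_sub_normSq_sub (a z : ℂ) :
    normSq (1 - conj a * z) - normSq (z - a) = (1 - normSq a) * (1 - normSq z) := by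
  simp only [normSq_apply, sub_re, sub_im, mul_re, mul_im, conj_re, conj_im, one_re, one_im]
  ring

lemma norm_blaschkeFactor_le_one (ha : a ∈ 𝔻) (hz : z ∈ 𝔻) : ‖blaschkeFactor a z‖ ≤ 1 := by
  have hden := norm_pos_iff.2 (one_sub_conj_mul_ne_zero ha hz)
  rw [blaschkeFactor, norm_div, div_le_one hden, ← sq_le_sq₀ (norm_nonneg _) hden.le,
    ← normSq_eq_norm_sq, ← normSq_eq_norm_sq, ← sub_nonneg,
    normSq_one_sub_conj_mul_sub_normSq_sub]
  rw [mem_ball_zero_iff, ← sq_lt_one_iff₀ (norm_nonneg _), ← normSq_eq_norm_sq] at ha hz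
  exact mul_nonneg (sub_nonneg.2 ha.le) (sub_nonneg.2 hz.le)

lemma norm_sub_div_two_le_norm_blaschkeFactor (ha : a ∈ 𝔻) (hz : z ∈ 𝔻) :
    ‖z - a‖ / 2 ≤ ‖blaschkeFactor a z‖ := by
  rw [blaschkeFactor, norm_div]
  exact div_le_div_of_nonneg_left (norm_nonneg _)
    (norm_pos_iff.2 (one_sub_conj_mul_ne_zero ha hz)) (norm_one_sub_conj_mul_le_two ha hz)

lemma blaschkeFactor_eq_zero_iff (ha : a ∈ 𝔻) (hz : z ∈ 𝔻) : blaschkeFactor a z = 0 ↔ z = a := by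
  rw [blaschkeFactor, div_eq_zero_iff, sub_eq_zero, or_iff_left (one_sub_conj_mul_ne_zero ha hz)]

lemma differentiableOn_blaschkeFactor (ha : a ∈ 𝔻) : DifferentiableOn ℂ (blaschkeFactor a) 𝔻 :=
  ((differentiable_id.sub_const a).differentiableOn).div
    ((differentiable_const 1).sub (differentiable_id.const_mul _)).differentiableOn
    fun _ hz => one_sub_conj_mul_ne_zero ha hz

end BlaschkeFactor

section BlaschkeProduct

variable {S : Finset ℂ} {z : ℂ}

lemma norm_blaschkeProduct_le_one (hS : ∀ a ∈ S, a ∈ 𝔻) (hz : z ∈ 𝔻) :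
    ‖blaschkeProduct S z‖ ≤ 1 := by
  rw [blaschkeProduct, norm_prod]
  exact Finset.prod_le_one (fun _ _ => norm_nonneg _)
    fun a ha => norm_blaschkeFactor_le_one (hS a ha) hz

lemma blaschkeProduct_eq_zero_iff (hS : ∀ a ∈ S, a ∈ 𝔻) (hz : z ∈ 𝔻) :
    blaschkeProduct S z = 0 ↔ z ∈ S := by
  rw [blaschkeProduct, Finset.prod_eq_zero_iff]
  constructor
  · rintro ⟨a, ha, hza⟩
    rwa [(blaschkeFactor_eq_zero_iff (hS a ha) hz).1 hza]
  · exact fun hzS => ⟨z, hzS, (blaschkeFactor_eq_zero_iff (hS z hzS) hz).2 rfl⟩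

lemma differentiableOn_blaschkeProduct (hS : ∀ a ∈ S, a ∈ 𝔻) :
    DifferentiableOn ℂ (blaschkeProduct S) 𝔻 := by
  unfold blaschkeProduct
  exact DifferentiableOn.fun_finsetProd fun a ha => differentiableOn_blaschkeFactor (hS a ha)

lemma blaschkeProduct_insert {a : ℂ} (ha : a ∉ S) (z : ℂ) :
    blaschkeProduct (insert a S) z = blaschkeFactor a z * blaschkeProduct S z :=
  Finset.prod_insert ha

lemma blaschkeProduct_image {ι : Type*} [Fintype ι] {p : ι → ℂ} (hp : Function.Injective p)
    (z : ℂ) : blaschkeProduct (Finset.univ.image p) z = ∏ j, blaschkeFactor (p j) z :=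
  Finset.prod_image hp.injOn

lemma eqOn_of_mul_blaschkeProduct_eqOn (hS : ∀ a ∈ S, a ∈ 𝔻) {f g : ℂ → ℂ}
    (hf : ContinuousOn f 𝔻) (hg : ContinuousOn g 𝔻)
    (hfg : EqOn (f * blaschkeProduct S) (g * blaschkeProduct S) 𝔻) : EqOn f g 𝔻 := by
  have hoff : EqOn f g (𝔻 ∩ (S : Set ℂ)ᶜ) := fun z ⟨hz, hzS⟩ =>
    mul_right_cancel₀ (mt (blaschkeProduct_eq_zero_iff hS hz).1 hzS) (hfg hz)
  exact hoff.of_subset_closure hf hg inter_subset_left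
    ((S.countable_toSet.dense_compl ℂ).open_subset_closure_inter Metric.isOpen_ball)

end BlaschkeProduct

section DivisionInL2

variable {μ : Measure ℂ} {f : ℂ → ℂ}

lemma memLp_mul_blaschkeProduct (hμ : ∀ᵐ z ∂μ, z ∈ 𝔻) {S : Finset ℂ} (hS : ∀ a ∈ S, a ∈ 𝔻)
    (hf : ContinuousOn f 𝔻) (hfL2 : MemLp f 2 μ) : MemLp (f * blaschkeProduct S) 2 μ := by
  refine hfL2.of_le ((hf.mul (differentiableOn_blaschkeProduct hS).continuousOn)
    |>.aestronglyMeasurable_of_ae_mem Metric.isOpen_ball.measurableSet hμ) ?_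
  filter_upwards [hμ] with z hz
  rw [Pi.mul_apply, norm_mul]
  exact mul_le_of_le_one_right (norm_nonneg _) (norm_blaschkeProduct_le_one hS hz)

variable [IsFiniteMeasure μ]

lemma exists_eqOn_mul_blaschkeFactor (hμ : ∀ᵐ z ∂μ, z ∈ 𝔻) {a : ℂ} (ha : a ∈ 𝔻)
    (hf : DifferentiableOn ℂ f 𝔻) (hfL2 : MemLp f 2 μ) (hfa : f a = 0) :
    ∃ h : ℂ → ℂ, DifferentiableOn ℂ h 𝔻 ∧ MemLp h 2 μ ∧ EqOn f (h * blaschkeFactor a) 𝔻 := by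
  have hdisc : 𝔻 ∈ nhds a := Metric.isOpen_ball.mem_nhds ha
  set h : ℂ → ℂ := fun z => dslope f a z * (1 - conj a * z)
  have hh : DifferentiableOn ℂ h 𝔻 := ((differentiableOn_dslope hdisc).2 hf).mul
    ((differentiable_const 1).sub (differentiable_id.const_mul _)).differentiableOn
  have hfh : EqOn f (h * blaschkeFactor a) 𝔻 := fun z hz => by
    have := sub_smul_dslope f a z
    rw [hfa, sub_zero, smul_eq_mul] at this
    have hden := one_sub_conj_mul_ne_zero ha hz
    simp only [h, Pi.mul_apply, blaschkeFactor]
    field_simp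
    linear_combination -this
  clear_value h
  obtain ⟨r, hr, hrD⟩ := Metric.nhds_basis_closedBall.mem_iff.1 hdisc
  obtain ⟨M, hM⟩ :=
    (isCompact_closedBall a r).exists_bound_of_continuousOn (hh.continuousOn.mono hrD)
  have hbound : ∀ z ∈ 𝔻, ‖h z‖ ≤ M + 2 / r * ‖f z‖ := by
    intro z hz
    rcases le_or_gt (dist z a) r with hzr | hzr
    · exact (hM z hzr).trans (le_add_of_nonneg_right (by positivity))
    · rw [dist_eq_norm] at hzr
      have hlow : ‖h z‖ * (r / 2) ≤ ‖f z‖ := by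
        rw [hfh hz, Pi.mul_apply, norm_mul]
        refine mul_le_mul_of_nonneg_left ?_ (norm_nonneg _)
        exact (div_le_div_of_nonneg_right hzr.le zero_le_two).trans
          (norm_sub_div_two_le_norm_blaschkeFactor ha hz)
      have hM0 : 0 ≤ M := (norm_nonneg _).trans (hM a (Metric.mem_closedBall_self hr.le))
      calc ‖h z‖ ≤ ‖f z‖ / (r / 2) := (le_div_iff₀ (by positivity)).2 hlow
        _ = 2 / r * ‖f z‖ := by ring
        _ ≤ M + 2 / r * ‖f z‖ := le_add_of_nonneg_left hM0
  refine ⟨h, hh, ?_, hfh⟩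
  refine ((memLp_const M).add (hfL2.norm.const_mul (2 / r))).of_le
    (hh.continuousOn.aestronglyMeasurable_of_ae_mem Metric.isOpen_ball.measurableSet hμ) ?_
  filter_upwards [hμ] with z hz
  exact (hbound z hz).trans (le_abs_self _)

lemma exists_eqOn_mul_blaschkeProduct (hμ : ∀ᵐ z ∂μ, z ∈ 𝔻) {S : Finset ℂ} (hS : ∀ a ∈ S, a ∈ 𝔻)
    (hf : DifferentiableOn ℂ f 𝔻) (hfL2 : MemLp f 2 μ) (hfS : ∀ a ∈ S, f a = 0) :
    ∃ h : ℂ → ℂ, DifferentiableOn ℂ h 𝔻 ∧ MemLp h 2 μ ∧ EqOn f (h * blaschkeProduct S) 𝔻 := by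
  induction S using Finset.induction_on generalizing f with
  | empty => exact ⟨f, hf, hfL2, fun z _ => by simp [blaschkeProduct]⟩
  | insert a S haS ih =>
    have haD := hS a (Finset.mem_insert_self a S)
    obtain ⟨h₁, hh₁, hh₁L2, hfh₁⟩ :=
      exists_eqOn_mul_blaschkeFactor hμ haD hf hfL2 (hfS a (Finset.mem_insert_self a S))
    have hh₁S : ∀ b ∈ S, h₁ b = 0 := by
      intro b hb
      have hbD := hS b (Finset.mem_insert_of_mem hb)
      have hab : blaschkeFactor a b ≠ 0 :=
        mt (blaschkeFactor_eq_zero_iff haD hbD).1 fun hba => haS (hba ▸ hb)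
      simpa [hab, hfS b (Finset.mem_insert_of_mem hb)] using (hfh₁ hbD).symm
    obtain ⟨h, hh, hhL2, hh₁h⟩ :=
      ih (fun b hb => hS b (Finset.mem_insert_of_mem hb)) hh₁ hh₁L2 hh₁S
    refine ⟨h, hh, hhL2, fun z hz => ?_⟩
    rw [hfh₁ hz, Pi.mul_apply, hh₁h hz, Pi.mul_apply, Pi.mul_apply, blaschkeProduct_insert haS]
    ring

theorem memLp_and_eq_zero_iff_exists_eqOn_mul_blaschkeProduct (hμ : ∀ᵐ z ∂μ, z ∈ 𝔻)
    {S : Finset ℂ} (hS : ∀ a ∈ S, a ∈ 𝔻) (hf : DifferentiableOn ℂ f 𝔻) :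
    (MemLp f 2 μ ∧ ∀ a ∈ S, f a = 0) ↔
      ∃ h : ℂ → ℂ, DifferentiableOn ℂ h 𝔻 ∧ MemLp h 2 μ ∧ EqOn f (h * blaschkeProduct S) 𝔻 := by
  refine ⟨fun ⟨hfL2, hfS⟩ => exists_eqOn_mul_blaschkeProduct hμ hS hf hfL2 hfS, ?_⟩
  rintro ⟨h, hh, hhL2, hfh⟩
  refine ⟨(memLp_mul_blaschkeProduct hμ hS hh.continuousOn hhL2).ae_eq ?_, fun a ha => ?_⟩
  · filter_upwards [hμ] with z hz using (hfh hz).symm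
  · rw [hfh (hS a ha), Pi.mul_apply, (blaschkeProduct_eq_zero_iff hS (hS a ha)).2 ha, mul_zero]

theorem memLp_and_eq_zero_iff_exists_mul_blaschkeProduct_eqOn (hμ : ∀ᵐ z ∂μ, z ∈ 𝔻)
    {P Q : Finset ℂ} (hP : ∀ a ∈ P, a ∈ 𝔻) (hQ : ∀ a ∈ Q, a ∈ 𝔻) (hf : DifferentiableOn ℂ f 𝔻) :
    (MemLp f 2 μ ∧ ∀ a ∈ P, f a = 0) ↔
      ∃ g : ℂ → ℂ, DifferentiableOn ℂ g 𝔻 ∧ MemLp g 2 μ ∧ (∀ a ∈ Q, g a = 0) ∧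
        EqOn (f * blaschkeProduct Q) (g * blaschkeProduct P) 𝔻 := by
  rw [memLp_and_eq_zero_iff_exists_eqOn_mul_blaschkeProduct hμ hP hf]
  constructor
  · rintro ⟨h, hh, hhL2, hfh⟩
    refine ⟨h * blaschkeProduct Q, hh.mul (differentiableOn_blaschkeProduct hQ),
      memLp_mul_blaschkeProduct hμ hQ hh.continuousOn hhL2, fun a ha => ?_, fun z hz => ?_⟩
    · rw [Pi.mul_apply, (blaschkeProduct_eq_zero_iff hQ (hQ a ha)).2 ha, mul_zero]
    · simp only [Pi.mul_apply, hfh hz]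
      ring
  · rintro ⟨g, hg, hgL2, hgQ, hfg⟩
    obtain ⟨h, hh, hhL2, hgh⟩ := exists_eqOn_mul_blaschkeProduct hμ hQ hg hgL2 hgQ
    refine ⟨h, hh, hhL2, eqOn_of_mul_blaschkeProduct_eqOn hQ hf.continuousOn
      (hh.mul (differentiableOn_blaschkeProduct hP)).continuousOn fun z hz => ?_⟩
    simp only [Pi.mul_apply, hfg hz, hgh hz]
    ring

end DivisionInL2

/-- `𝓑_ω` is the space of holomorphic functions in `L²(bergmanMeasure ω)`. -/
noncomputable def bergmanMeasure (ω : ℂ → ℝ) : Measure ℂ :=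
  (volume.restrict 𝔻).withDensity fun z => ENNReal.ofReal (ω z)

lemma ae_mem_bergmanMeasure (ω : ℂ → ℝ) : ∀ᵐ z ∂bergmanMeasure ω, z ∈ 𝔻 :=
  withDensity_absolutelyContinuous _ _ (ae_restrict_mem Metric.isOpen_ball.measurableSet)

lemma isFiniteMeasure_bergmanMeasure {ω : ℂ → ℝ} (hω : IntegrableOn ω 𝔻) :
    IsFiniteMeasure (bergmanMeasure ω) :=
  isFiniteMeasure_withDensity_ofReal hω.hasFiniteIntegral

lemma lintegral_ofReal_sq_mul_lt_top_iff_memLp {ω : ℂ → ℝ} (hω : AEMeasurable ω (volume.restrict 𝔻))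
    {f : ℂ → ℂ} (hf : ContinuousOn f 𝔻) :
    ∫⁻ z in 𝔻, ENNReal.ofReal (‖f z‖ ^ 2 * ω z) < ⊤ ↔ MemLp f 2 (bergmanMeasure ω) := by
  have hfm := hf.aestronglyMeasurable (μ := volume) Metric.isOpen_ball.measurableSet
  have hlint : ∫⁻ z in 𝔻, ENNReal.ofReal (‖f z‖ ^ 2 * ω z) =
      ∫⁻ z, ‖f z‖ₑ ^ (2 : ENNReal).toReal ∂bergmanMeasure ω := by
    rw [bergmanMeasure, lintegral_withDensity_eq_lintegral_mul₀ hω.ennreal_ofReal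
      (hfm.enorm.pow_const _)]
    congr with z
    rw [Pi.mul_apply, ENNReal.toReal_ofNat, ENNReal.rpow_two, mul_comm,
      ENNReal.ofReal_mul' (sq_nonneg _), ENNReal.ofReal_pow (norm_nonneg _), ofReal_norm]
  rw [hlint, ← eLpNorm_lt_top_iff_lintegral_rpow_enorm_lt_top two_ne_zero ENNReal.ofNat_ne_top]
  exact ⟨fun h => ⟨hf.aestronglyMeasurable_of_ae_mem Metric.isOpen_ball.measurableSet
    (ae_mem_bergmanMeasure ω), h⟩, MemLp.eLpNorm_lt_top⟩

end Complex

theorem stmt1_general (ω : ℂ → ℝ)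
    (hω_int : IntegrableOn ω (Metric.ball (0 : ℂ) 1))
    (ℓ k : ℕ) (p : Fin ℓ → ℂ) (q : Fin k → ℂ)
    (hpD : ∀ i, p i ∈ Metric.ball (0 : ℂ) 1) (hqD : ∀ i, q i ∈ Metric.ball (0 : ℂ) 1)
    (hp : Function.Injective p) (hq : Function.Injective q)
    (f : ℂ → ℂ) (hf : DifferentiableOn ℂ f (Metric.ball 0 1)) :
    ((∫⁻ z in Metric.ball (0 : ℂ) 1, ENNReal.ofReal (‖f z‖ ^ 2 * ω z)) < ⊤ ∧
      ∀ i, f (p i) = 0) ↔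
    (∃ g : ℂ → ℂ, DifferentiableOn ℂ g (Metric.ball 0 1) ∧
      (∫⁻ z in Metric.ball (0 : ℂ) 1, ENNReal.ofReal (‖g z‖ ^ 2 * ω z)) < ⊤ ∧
      (∀ i, g (q i) = 0) ∧
      ∀ z ∈ Metric.ball (0 : ℂ) 1,
        f z * ∏ j, ((z - q j) / (1 - (starRingEnd ℂ) (q j) * z)) =
        g z * ∏ j, ((z - p j) / (1 - (starRingEnd ℂ) (p j) * z))) := by
  have := Complex.isFiniteMeasure_bergmanMeasure hω_int
  have hω := hω_int.aemeasurable
  have key := Complex.memLp_and_eq_zero_iff_exists_mul_blaschkeProduct_eqOn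
    (Complex.ae_mem_bergmanMeasure ω) (P := Finset.univ.image p) (Q := Finset.univ.image q)
    (by simpa using hpD) (by simpa using hqD) hf
  simp only [Finset.forall_mem_image, Finset.mem_univ, true_imp_iff, EqOn, Pi.mul_apply,
    Complex.blaschkeProduct_image hp, Complex.blaschkeProduct_image hq] at key
  rw [Complex.lintegral_ofReal_sq_mul_lt_top_iff_memLp hω hf.continuousOn, key]
  refine exists_congr fun g => and_congr_right fun hg => ?_
  rw [Complex.lintegral_ofReal_sq_mul_lt_top_iff_memLp hω hg.continuousOn]
  rfl

/-- For an integrable positive weight `ω` on the unit disc and tuples `p ∈ 𝔻^ℓ`,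
`q ∈ 𝔻^k` of distinct points, a holomorphic function `f` on `𝔻` belongs to the Palm subspace
`𝓑_ω(p)` of the generalized Bergman space iff there exists `g ∈ 𝓑_ω(q)` with
`f z * b_q z = g z * b_p z` on `𝔻`, where `b_p(z) = ∏ (z - pⱼ)/(1 - conj(pⱼ) z)`. -/
theorem stmt1 (ω : ℂ → ℝ) (hω_pos : ∀ z ∈ Metric.ball (0 : ℂ) 1, 0 < ω z)
    (hω_int : IntegrableOn ω (Metric.ball (0 : ℂ) 1))
    (ℓ k : ℕ) (p : Fin ℓ → ℂ) (q : Fin k → ℂ)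
    (hpD : ∀ i, p i ∈ Metric.ball (0 : ℂ) 1) (hqD : ∀ i, q i ∈ Metric.ball (0 : ℂ) 1)
    (hp : Function.Injective p) (hq : Function.Injective q)
    (f : ℂ → ℂ) (hf : DifferentiableOn ℂ f (Metric.ball 0 1)) :
    ((∫⁻ z in Metric.ball (0 : ℂ) 1, ENNReal.ofReal (‖f z‖ ^ 2 * ω z)) < ⊤ ∧
      ∀ i, f (p i) = 0) ↔
    (∃ g : ℂ → ℂ, DifferentiableOn ℂ g (Metric.ball 0 1) ∧
      (∫⁻ z in Metric.ball (0 : ℂ) 1, ENNReal.ofReal (‖g z‖ ^ 2 * ω z)) < ⊤ ∧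
      (∀ i, g (q i) = 0) ∧
      ∀ z ∈ Metric.ball (0 : ℂ) 1,
        f z * ∏ j, ((z - q j) / (1 - (starRingEnd ℂ) (q j) * z)) =
        g z * ∏ j, ((z - p j) / (1 - (starRingEnd ℂ) (p j) * z))) :=
  stmt1_general ω hω_int ℓ k p q hpD hqD hp hq f hf
end

section
/- For α > 0, the series ∑_{n=1}^∞ (∫_ℂ |z|^{2(n−1)} e^{−|z|^α} dλ(z)) / (∫_ℂ |z|^{2n} e^{−|z|^α} dλ(z)) converges if and only if 0 < α < 2; equivalently, ∑_{n=1}^∞ Γ(2n/α)/Γ((2n+2)/α) < ∞ if and only if α < 2. -/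
/-!
In polar coordinates `∫_ℂ |z|^q e^{-|z|^p} dλ = (2π/p) Γ((q+2)/p)`, so with `c = 2/α` both series
have terms `Γ(x)/Γ(x+c)` at `x = c(n+1)`. Since `log Γ` is convex, its slope on `[x, x+c]` lies
below (`c ≤ 1`) or above (`c ≥ 1`) its slope `log x` on `[x, x+1]`; hence `Γ(x)/Γ(x+c)` is
`≥ x^{-c}` or `≤ x^{-c}` respectively, and the series converges exactly when `∑ n^{-c}` does,
i.e. when `c > 1`.
-/

open MeasureTheory Real Set

theorem Complex.integral_norm_rpow_mul_exp_neg_norm_rpow {p q : ℝ} (hp : 0 < p) (hq : -2 < q) :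
    ∫ z : ℂ, ‖z‖ ^ q * rexp (-‖z‖ ^ p) = (2 * π / p) * Real.Gamma ((q + 2) / p) := by
  have hradial : ∫ y in Ioi (0 : ℝ), y ^ (Module.finrank ℝ ℂ - 1) • (y ^ q * rexp (-y ^ p)) =
      ∫ y in Ioi (0 : ℝ), y ^ (q + 1) * rexp (-y ^ p) := by
    refine setIntegral_congr_fun measurableSet_Ioi fun y hy => ?_
    rw [Complex.finrank_real_complex, smul_eq_mul, rpow_add hy, rpow_one]
    ring
  rw [integral_fun_norm_addHaar volume (fun y => y ^ q * rexp (-y ^ p)), hradial,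
    _root_.integral_rpow_mul_exp_neg_rpow hp (by linarith), measureReal_def, Complex.volume_ball,
    Complex.finrank_real_complex, add_assoc, one_add_one_eq_two]
  simp only [ENNReal.ofReal_one, one_pow, one_mul, ENNReal.coe_toReal, NNReal.coe_real_pi,
    smul_eq_mul, nsmul_eq_mul, Nat.cast_ofNat]
  ring

theorem Complex.integral_norm_pow_mul_exp_neg_norm_rpow {p : ℝ} (hp : 0 < p) (m : ℕ) :
    ∫ z : ℂ, ‖z‖ ^ m * rexp (-‖z‖ ^ p) = (2 * π / p) * Real.Gamma ((m + 2) / p) := by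
  simpa only [rpow_natCast] using
    integral_norm_rpow_mul_exp_neg_norm_rpow hp (q := m) (by linarith [m.cast_nonneg (α := ℝ)])

namespace Real

theorem log_Gamma_add_one {x : ℝ} (hx : 0 < x) :
    log (Gamma (x + 1)) = log (Gamma x) + log x := by
  rw [Gamma_add_one hx.ne', log_mul hx.ne' (Gamma_pos_of_pos hx).ne', add_comm]

theorem log_Gamma_add_sub_log_Gamma_le {x c : ℝ} (hx : 0 < x) (hc : 0 < c) (hc1 : c ≤ 1) :
    log (Gamma (x + c)) - log (Gamma x) ≤ c * log x := by
  have := convexOn_log_Gamma.secant_mono (a := x) hx (mem_Ioi.2 (by linarith))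
    (mem_Ioi.2 (by linarith)) (by linarith) (by linarith) (by linarith : x + c ≤ x + 1)
  simp only [Function.comp_apply, add_sub_cancel_left, div_one, log_Gamma_add_one hx] at this
  rwa [div_le_iff₀ hc, mul_comm] at this

theorem mul_log_le_log_Gamma_add_sub_log_Gamma {x c : ℝ} (hx : 0 < x) (hc1 : 1 ≤ c) :
    c * log x ≤ log (Gamma (x + c)) - log (Gamma x) := by
  have := convexOn_log_Gamma.secant_mono (a := x) hx (mem_Ioi.2 (by linarith))
    (mem_Ioi.2 (by linarith)) (by linarith) (by linarith) (by linarith : x + 1 ≤ x + c)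
  simp only [Function.comp_apply, add_sub_cancel_left, div_one, log_Gamma_add_one hx] at this
  rwa [le_div_iff₀ (by linarith), mul_comm] at this

theorem rpow_neg_le_Gamma_div_Gamma_add {x c : ℝ} (hx : 0 < x) (hc : 0 < c) (hc1 : c ≤ 1) :
    x ^ (-c) ≤ Gamma x / Gamma (x + c) := by
  rw [← log_le_log_iff (by positivity) (by positivity), log_rpow hx,
    log_div (by positivity) (by positivity)]
  linarith [log_Gamma_add_sub_log_Gamma_le hx hc hc1]

theorem Gamma_div_Gamma_add_le_rpow_neg {x c : ℝ} (hx : 0 < x) (hc1 : 1 ≤ c) :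
    Gamma x / Gamma (x + c) ≤ x ^ (-c) := by
  rw [← log_le_log_iff (by positivity) (by positivity), log_rpow hx,
    log_div (by positivity) (by positivity)]
  linarith [mul_log_le_log_Gamma_add_sub_log_Gamma hx hc1]

end Real

theorem summable_mul_nat_add_one_rpow_neg_iff {a c : ℝ} (ha : 0 < a) :
    Summable (fun n : ℕ => (a * (n + 1)) ^ (-c)) ↔ 1 < c := by
  simp_rw [mul_rpow ha.le (Nat.cast_add_one_pos _).le]
  rw [summable_mul_left_iff (rpow_pos_of_pos ha _).ne']
  have := summable_nat_add_iff (f := fun n : ℕ => (n : ℝ) ^ (-c)) 1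
  push_cast at this
  rw [this, summable_nat_rpow]
  constructor <;> intro h <;> linarith

theorem summable_Gamma_div_Gamma_add_iff {a c : ℝ} (ha : 0 < a) (hc : 0 < c) :
    Summable (fun n : ℕ => Gamma (a * (n + 1)) / Gamma (a * (n + 1) + c)) ↔ 1 < c := by
  have hx (n : ℕ) : 0 < a * (n + 1) := by positivity
  rcases le_or_gt c 1 with hc1 | hc1
  · simp only [not_lt.2 hc1, iff_false]
    intro hsum
    refine not_lt.2 hc1 ((summable_mul_nat_add_one_rpow_neg_iff ha).1 ?_)
    exact hsum.of_nonneg_of_le (fun n => by positivity)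
      (fun n => rpow_neg_le_Gamma_div_Gamma_add (hx n) hc hc1)
  · simp only [hc1, iff_true]
    exact ((summable_mul_nat_add_one_rpow_neg_iff ha).2 hc1).of_nonneg_of_le
      (fun n => by positivity) (fun n => Gamma_div_Gamma_add_le_rpow_neg (hx n) hc1.le)

/-- For `α > 0`, the series (over `n ≥ 1`, here reindexed by `n ↦ n+1`) of ratios
`∫_ℂ |z|^(2(n−1)) e^(−|z|^α) dλ / ∫_ℂ |z|^(2n) e^(−|z|^α) dλ` converges iff `0 < α < 2`;
equivalently `∑_{n≥1} Γ(2n/α)/Γ((2n+2)/α) < ∞` iff `α < 2`. -/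
theorem stmt4 (α : ℝ) (hα : 0 < α) :
    (Summable (fun n : ℕ =>
        (∫ z : ℂ, ‖z‖ ^ (2 * n) * Real.exp (-(‖z‖ ^ α))) /
        (∫ z : ℂ, ‖z‖ ^ (2 * (n + 1)) * Real.exp (-(‖z‖ ^ α)))) ↔
      α < 2) ∧
    (Summable (fun n : ℕ =>
        Real.Gamma ((2 * (n + 1 : ℝ)) / α) / Real.Gamma ((2 * (n + 1 : ℝ) + 2) / α)) ↔
      α < 2) := by
  have hc : 0 < 2 / α := by positivity
  have hGamma := summable_Gamma_div_Gamma_add_iff hc hc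
  rw [one_lt_div hα] at hGamma
  refine ⟨?_, ?_⟩
  · convert hGamma using 3 with n
    rw [Complex.integral_norm_pow_mul_exp_neg_norm_rpow hα,
      Complex.integral_norm_pow_mul_exp_neg_norm_rpow hα, mul_div_mul_left _ _ (by positivity)]
    congr 2 <;> push_cast <;> ring
  · convert hGamma using 3 with n
    congr 2 <;> ring
end

section
/- For every δ > 0 and every R > 0, the double integral ∬_{|z| ≥ R, |w| ≥ R} |1/z − 1/w|² e^{−δ|z−w|} dλ(z) dλ(w) is finite. -/
/-!
On the region, `‖1/z - 1/w‖² = ‖z - w‖² / (‖z‖‖w‖)² ≤ (‖z‖⁻⁴ + ‖w‖⁻⁴) ‖z - w‖²`, so the integrand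
is dominated by `a z * k (w - z) + a w * k (z - w)` with `a = ‖·‖⁻⁴` on `{R ≤ ‖·‖}` and
`k u = ‖u‖² e^{-δ‖u‖}`. Both are integrable on `ℂ ≅ ℝ²` (`a` because `4 > 2`), and by translation
invariance of Lebesgue measure each term integrates to `(∫ a) (∫ k)`.
-/

open MeasureTheory Set
open scoped ENNReal

theorem norm_inv_sub_inv_sq_le {𝕜 : Type*} [NormedField 𝕜] (z w : 𝕜) :
    ‖z⁻¹ - w⁻¹‖ ^ 2 ≤ ((‖z‖ ^ 4)⁻¹ + (‖w‖ ^ 4)⁻¹) * ‖z - w‖ ^ 2 := by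
  -- with `0⁻¹ = 0` the two sides agree when `z = 0` or `w = 0`
  rcases eq_or_ne z 0 with rfl | hz
  · rcases eq_or_ne w 0 with rfl | hw
    · simp
    · refine le_of_eq ?_
      simp only [inv_zero, zero_sub, norm_neg, norm_inv, norm_zero, ne_eq, OfNat.ofNat_ne_zero,
        not_false_eq_true, zero_pow, zero_add]
      field_simp
  rcases eq_or_ne w 0 with rfl | hw
  · refine le_of_eq ?_
    simp only [inv_zero, sub_zero, norm_inv, norm_zero, ne_eq, OfNat.ofNat_ne_zero,
      not_false_eq_true, zero_pow, add_zero]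
    field_simp
  have hamgm : ((‖z‖ * ‖w‖) ^ 2)⁻¹ ≤ (‖z‖ ^ 4)⁻¹ + (‖w‖ ^ 4)⁻¹ := by
    have hx : 0 < (‖z‖ ^ 2)⁻¹ := by positivity
    have hy : 0 < (‖w‖ ^ 2)⁻¹ := by positivity
    rw [show ((‖z‖ * ‖w‖) ^ 2)⁻¹ = (‖z‖ ^ 2)⁻¹ * (‖w‖ ^ 2)⁻¹ by ring,
      show (‖z‖ ^ 4)⁻¹ = ((‖z‖ ^ 2)⁻¹) ^ 2 by ring, show (‖w‖ ^ 4)⁻¹ = ((‖w‖ ^ 2)⁻¹) ^ 2 by ring]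
    nlinarith [sq_nonneg ((‖z‖ ^ 2)⁻¹ - (‖w‖ ^ 2)⁻¹)]
  calc ‖z⁻¹ - w⁻¹‖ ^ 2 = ((‖z‖ * ‖w‖) ^ 2)⁻¹ * ‖z - w‖ ^ 2 := by
        rw [inv_sub_inv hz hw, norm_div, norm_mul, norm_sub_rev, div_pow, div_eq_inv_mul]
    _ ≤ _ := by gcongr

section Convolution

variable {G : Type*} [MeasurableSpace G] [AddGroup G] [MeasurableAdd₂ G] [MeasurableNeg G]
  {μ ν : Measure G} [SFinite ν] [ν.IsAddRightInvariant] {f g : G → ℝ≥0∞}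

theorem lintegral_prod_mul_sub_fst (hf : Measurable f) (hg : Measurable g) :
    ∫⁻ p, f p.1 * g (p.2 - p.1) ∂μ.prod ν = (∫⁻ x, f x ∂μ) * ∫⁻ y, g y ∂ν := by
  have inner (x : G) : ∫⁻ y, f x * g (y - x) ∂ν = f x * ∫⁻ y, g y ∂ν := by
    rw [lintegral_const_mul _ (by fun_prop), lintegral_sub_right_eq_self]
  rw [lintegral_prod _ (by fun_prop), lintegral_congr inner, lintegral_mul_const _ hf]

theorem lintegral_prod_mul_sub_snd [SFinite μ] (hf : Measurable f) (hg : Measurable g) :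
    ∫⁻ p, f p.2 * g (p.1 - p.2) ∂ν.prod μ = (∫⁻ x, f x ∂μ) * ∫⁻ y, g y ∂ν :=
  (lintegral_prod_swap fun p => f p.1 * g (p.2 - p.1)).trans (lintegral_prod_mul_sub_fst hf hg)

end Convolution

section Radial

variable {E : Type*} [NormedAddCommGroup E] [NormedSpace ℝ E] [FiniteDimensional ℝ E]
  [MeasurableSpace E] [BorelSpace E] [Nontrivial E] (μ : Measure E) [μ.IsAddHaarMeasure]

theorem integrable_norm_pow_mul_exp_neg_mul_norm (k : ℕ) {b : ℝ} (hb : 0 < b) :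
    Integrable (fun x : E => ‖x‖ ^ k * Real.exp (-b * ‖x‖)) μ := by
  rw [integrable_fun_norm_addHaar μ (f := fun y => y ^ k * Real.exp (-b * y))]
  have hs : (-1 : ℝ) < (Module.finrank ℝ E - 1 + k : ℕ) := by
    linarith [(Module.finrank ℝ E - 1 + k).cast_nonneg (α := ℝ)]
  refine (integrableOn_rpow_mul_exp_neg_mul_rpow hs one_pos hb).congr_fun (fun y _ => ?_)
    measurableSet_Ioi
  simp only [Real.rpow_natCast, Real.rpow_one, pow_add, mul_assoc, smul_eq_mul]

theorem integrableOn_norm_rpow_neg {r R : ℝ} (hr : Module.finrank ℝ E < r) (hR : 0 < R) :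
    IntegrableOn (fun x : E => ‖x‖ ^ (-r)) {x | R ≤ ‖x‖} μ := by
  rw [← integrable_indicator_iff (measurableSet_le measurable_const measurable_norm)]
  have hradial : ({x : E | R ≤ ‖x‖}.indicator fun x => ‖x‖ ^ (-r)) =
      fun x => (Ici R).indicator (fun y : ℝ => y ^ (-r)) ‖x‖ := by
    ext x; by_cases h : R ≤ ‖x‖ <;> simp [h]
  rw [hradial, integrable_fun_norm_addHaar μ]
  have hpow : IntegrableOn (fun y : ℝ => y ^ ((Module.finrank ℝ E - 1 : ℕ) - r)) (Ici R) := by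
    rw [integrableOn_Ici_iff_integrableOn_Ioi]
    refine integrableOn_Ioi_rpow_of_lt ?_ hR
    rw [Nat.cast_sub Module.finrank_pos]
    push_cast
    linarith
  refine (((integrable_indicator_iff measurableSet_Ici).2 hpow).integrableOn).congr_fun
    (fun y (hy : 0 < y) => ?_) measurableSet_Ioi
  by_cases h : R ≤ y
  · simp [h, Real.rpow_sub hy, Real.rpow_neg hy.le, div_eq_mul_inv]
  · simp [h]

theorem setLIntegral_ofReal_inv_norm_pow_lt_top {n : ℕ} (hn : Module.finrank ℝ E < n) {R : ℝ}
    (hR : 0 < R) : ∫⁻ x in {x | R ≤ ‖x‖}, ENNReal.ofReal (‖x‖ ^ n)⁻¹ ∂μ < ∞ := by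
  have hn' : (Module.finrank ℝ E : ℝ) < n := by exact_mod_cast hn
  refine ((integrableOn_norm_rpow_neg μ hn' hR).lintegral_lt_top).trans_eq' ?_
  simp_rw [Real.rpow_neg (norm_nonneg _), Real.rpow_natCast]

end Radial

/-- For every `δ > 0` and `R > 0`,
`∬_{|z|≥R, |w|≥R} |1/z − 1/w|² e^(−δ|z−w|) dλ(z) dλ(w) < ∞`. -/
theorem stmt7 (δ R : ℝ) (hδ : 0 < δ) (hR : 0 < R) :
    (∫⁻ p : ℂ × ℂ in {p : ℂ × ℂ | R ≤ ‖p.1‖ ∧ R ≤ ‖p.2‖},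
      ENNReal.ofReal
        (‖1 / p.1 - 1 / p.2‖ ^ 2 *
          Real.exp (-δ * ‖p.1 - p.2‖))) < ⊤ := by
  set T : Set ℂ := {z | R ≤ ‖z‖}
  have hT : MeasurableSet T := measurableSet_le measurable_const measurable_norm
  set A : ℂ → ℝ≥0∞ := T.indicator fun z => ENNReal.ofReal (‖z‖ ^ 4)⁻¹
  set h : ℂ → ℝ≥0∞ := fun u => ENNReal.ofReal (‖u‖ ^ 2 * Real.exp (-δ * ‖u‖))
  have hA : Measurable A := by fun_prop
  have hh : Measurable h := by fun_prop
  have hA_fin : ∫⁻ z, A z < ∞ := by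
    rw [lintegral_indicator hT]
    exact setLIntegral_ofReal_inv_norm_pow_lt_top volume (by simp) hR
  have hh_fin : ∫⁻ u, h u < ∞ :=
    (integrable_norm_pow_mul_exp_neg_mul_norm volume 2 hδ).lintegral_lt_top
  have hbound : ∀ p ∈ T ×ˢ T,
      ENNReal.ofReal (‖1 / p.1 - 1 / p.2‖ ^ 2 * Real.exp (-δ * ‖p.1 - p.2‖))
        ≤ A p.1 * h (p.2 - p.1) + A p.2 * h (p.1 - p.2) := by
    rintro ⟨z, w⟩ ⟨hz, hw⟩
    simp only [A, h, indicator_of_mem hz, indicator_of_mem hw, norm_sub_rev w z]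
    rw [← ENNReal.ofReal_mul (by positivity), ← ENNReal.ofReal_mul (by positivity),
      ← ENNReal.ofReal_add (by positivity) (by positivity)]
    refine ENNReal.ofReal_le_ofReal ?_
    calc ‖1 / z - 1 / w‖ ^ 2 * Real.exp (-δ * ‖z - w‖)
        ≤ ((‖z‖ ^ 4)⁻¹ + (‖w‖ ^ 4)⁻¹) * ‖z - w‖ ^ 2 * Real.exp (-δ * ‖z - w‖) := by
          gcongr
          simpa only [one_div] using norm_inv_sub_inv_sq_le z w
      _ = _ := by ring
  calc _ ≤ ∫⁻ p : ℂ × ℂ in T ×ˢ T, A p.1 * h (p.2 - p.1) + A p.2 * h (p.1 - p.2) :=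
        setLIntegral_mono (by fun_prop) hbound
    _ ≤ ∫⁻ p : ℂ × ℂ, A p.1 * h (p.2 - p.1) + A p.2 * h (p.1 - p.2) :=
        setLIntegral_le_lintegral _ _
    _ = 2 * ((∫⁻ z, A z) * ∫⁻ u, h u) := by
        rw [lintegral_add_left (by fun_prop), Measure.volume_eq_prod,
          lintegral_prod_mul_sub_fst hA hh, lintegral_prod_mul_sub_snd hA hh, two_mul]
    _ < ∞ := by finiteness
end

section
/- For every δ > 0, lim_{n→∞} ∫_{|z| ≤ n} ∫_{|w| ≥ n} |w|^{−2} e^{−δ|z−w|} dλ(w) dλ(z) = 0, where the limit is over integers n ≥ 1. -/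
open MeasureTheory Filter Real Metric Topology

/-! Split `e^{-δ‖z-w‖}` into two halves. For `‖z‖ ≤ r ≤ ‖w‖` we have `‖z - w‖ ≥ r - ‖z‖`, so one
half is at most `e^{-δ(r-‖z‖)/2}`, while the other half, integrated in `w`, is the finite constant
`C = ∫ e^{-δ‖u‖/2}` by translation invariance. Together with `‖w‖⁻² ≤ r⁻²` the double integral
is at most `C r⁻² ∫_{‖z‖≤r} e^{-δ(r-‖z‖)/2} dz`. On the disc of radius `r - √r` the integrand is
at most `e^{-δ√r/2}`, and the remaining annulus has area at most `2πr√r`, so the bound is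
`C (π e^{-δ√r/2} + 2π/√r) → 0`. -/

theorem Complex.integrable_exp_neg_mul_norm {b : ℝ} (hb : 0 < b) :
    Integrable fun x : ℂ => rexp (-b * ‖x‖) := by
  -- the integral is `π b⁻² Γ(3) ≠ 0`, whereas a non-integrable function has integral `0`
  refine Integrable.of_integral_ne_zero ?_
  have h := Complex.integral_exp_neg_mul_rpow le_rfl hb
  simp only [rpow_one] at h
  rw [h]
  exact (mul_pos (mul_pos pi_pos (rpow_pos_of_pos hb _)) (Gamma_pos_of_pos (by norm_num))).ne'

section NormedGroup

variable {E : Type*} [NormedAddCommGroup E]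

theorem inv_norm_sq_mul_exp_le {δ r : ℝ} (hδ : 0 ≤ δ) (hr : 0 < r) {z w : E} (hw : r ≤ ‖w‖) :
    ‖w‖⁻¹ ^ 2 * rexp (-δ * ‖z - w‖) ≤
      r⁻¹ ^ 2 * rexp (-(δ / 2) * (r - ‖z‖)) * rexp (-(δ / 2) * ‖z - w‖) := by
  have hzw : r - ‖z‖ ≤ ‖z - w‖ := by
    linarith [norm_sub_norm_le w z, norm_sub_rev w z]
  calc ‖w‖⁻¹ ^ 2 * rexp (-δ * ‖z - w‖)
      = ‖w‖⁻¹ ^ 2 * (rexp (-(δ / 2) * ‖z - w‖) * rexp (-(δ / 2) * ‖z - w‖)) := by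
        rw [← Real.exp_add]; ring_nf
    _ ≤ r⁻¹ ^ 2 * (rexp (-(δ / 2) * (r - ‖z‖)) * rexp (-(δ / 2) * ‖z - w‖)) := by
        gcongr ?_⁻¹ ^ 2 * (?_ * _)
        exact exp_le_exp.2 (by nlinarith)
    _ = _ := by ring

variable [MeasurableSpace E] [BorelSpace E] (μ : Measure E)

theorem setLIntegral_norm_ge_inv_sq_mul_exp_le [μ.IsAddRightInvariant] {δ r : ℝ} (hδ : 0 ≤ δ)
    (hr : 0 < r) (z : E) :
    ∫⁻ w in {w | r ≤ ‖w‖}, ENNReal.ofReal (‖w‖⁻¹ ^ 2 * rexp (-δ * ‖z - w‖)) ∂μ ≤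
      ENNReal.ofReal (r⁻¹ ^ 2 * rexp (-(δ / 2) * (r - ‖z‖))) *
        ∫⁻ u, ENNReal.ofReal (rexp (-(δ / 2) * ‖u‖)) ∂μ := by
  calc _ ≤ ∫⁻ w in {w | r ≤ ‖w‖}, ENNReal.ofReal (r⁻¹ ^ 2 * rexp (-(δ / 2) * (r - ‖z‖))) *
          ENNReal.ofReal (rexp (-(δ / 2) * ‖w - z‖)) ∂μ := by
        refine setLIntegral_mono' (measurableSet_le measurable_const measurable_norm)
          fun w hw => ?_
        rw [← ENNReal.ofReal_mul (by positivity), norm_sub_rev w z]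
        exact ENNReal.ofReal_le_ofReal (inv_norm_sq_mul_exp_le hδ hr hw)
    _ ≤ ∫⁻ w, ENNReal.ofReal (r⁻¹ ^ 2 * rexp (-(δ / 2) * (r - ‖z‖))) *
          ENNReal.ofReal (rexp (-(δ / 2) * ‖w - z‖)) ∂μ := setLIntegral_le_lintegral _ _
    _ = _ := by
        rw [lintegral_const_mul' _ _ ENNReal.ofReal_ne_top,
          lintegral_sub_right_eq_self (fun u => ENNReal.ofReal (rexp (-(δ / 2) * ‖u‖))) z]

theorem setLIntegral_closedBall_exp_neg_le {ε r a : ℝ} (hε : 0 ≤ ε) :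
    ∫⁻ z in closedBall 0 r, ENNReal.ofReal (rexp (-ε * (r - ‖z‖))) ∂μ ≤
      ENNReal.ofReal (rexp (-ε * a)) * μ (closedBall 0 r) +
        μ (closedBall 0 r \ ball 0 (r - a)) := by
  have hA : MeasurableSet (closedBall (0 : E) r \ ball 0 (r - a)) :=
    measurableSet_closedBall.diff measurableSet_ball
  calc _ ≤ ∫⁻ z in closedBall 0 r, ENNReal.ofReal (rexp (-ε * a)) +
          (closedBall 0 r \ ball 0 (r - a)).indicator 1 z ∂μ := by
        refine setLIntegral_mono' measurableSet_closedBall fun z hz => ?_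
        rw [mem_closedBall_zero_iff] at hz
        by_cases hza : ‖z‖ < r - a
        · have : z ∉ closedBall 0 r \ ball 0 (r - a) := by simp [hza]
          simp only [Set.indicator_of_notMem this, add_zero]
          exact ENNReal.ofReal_le_ofReal (exp_le_exp.2 (by nlinarith))
        · have : z ∈ closedBall 0 r \ ball 0 (r - a) := by simp [hz, hza]
          rw [Set.indicator_of_mem this]
          refine le_add_left (ENNReal.ofReal_le_one.2 (exp_le_one_iff.2 ?_))
          nlinarith
    _ ≤ _ := by
        rw [lintegral_add_left measurable_const, setLIntegral_const, lintegral_indicator_one hA,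
          Measure.restrict_apply hA]
        gcongr
        exact Set.inter_subset_left

end NormedGroup

theorem Complex.volume_ball_eq_ofReal (x : ℂ) {r : ℝ} (hr : 0 ≤ r) :
    volume (ball x r) = ENNReal.ofReal (r ^ 2 * π) := by
  rw [Complex.volume_ball, ENNReal.ofReal_mul (by positivity), ENNReal.ofReal_pow hr,
    ← NNReal.coe_real_pi, ENNReal.ofReal_coe_nnreal]

theorem Complex.volume_closedBall_eq_ofReal (x : ℂ) {r : ℝ} (hr : 0 ≤ r) :
    volume (closedBall x r) = ENNReal.ofReal (r ^ 2 * π) := by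
  rw [Measure.addHaar_closedBall_eq_addHaar_ball, Complex.volume_ball_eq_ofReal x hr]

theorem Complex.volume_closedBall_zero_diff_ball_le {r a : ℝ} (ha : 0 ≤ a) (har : a ≤ r) :
    volume (closedBall (0 : ℂ) r \ ball 0 (r - a)) ≤ ENNReal.ofReal (2 * π * r * a) := by
  rw [measure_sdiff (ball_subset_closedBall.trans (closedBall_subset_closedBall (by linarith)))
      measurableSet_ball.nullMeasurableSet measure_ball_lt_top.ne,
    Complex.volume_closedBall_eq_ofReal 0 (by linarith),
    Complex.volume_ball_eq_ofReal 0 (by linarith), ← ENNReal.ofReal_sub _ (by positivity)]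
  exact ENNReal.ofReal_le_ofReal (by nlinarith [mul_nonneg pi_pos.le (sq_nonneg a)])

theorem Complex.setLIntegral_closedBall_inv_sq_mul_exp_le {ε r a : ℝ} (hε : 0 ≤ ε) (hr : 0 < r)
    (ha : 0 ≤ a) (har : a ≤ r) :
    ∫⁻ z in closedBall (0 : ℂ) r, ENNReal.ofReal (r⁻¹ ^ 2 * rexp (-ε * (r - ‖z‖))) ≤
      ENNReal.ofReal (π * rexp (-ε * a) + 2 * π * a / r) := by
  simp_rw [ENNReal.ofReal_mul (by positivity : 0 ≤ r⁻¹ ^ 2)]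
  rw [lintegral_const_mul' _ _ ENNReal.ofReal_ne_top]
  calc _ ≤ ENNReal.ofReal (r⁻¹ ^ 2) *
        (ENNReal.ofReal (rexp (-ε * a)) * ENNReal.ofReal (r ^ 2 * π) +
          ENNReal.ofReal (2 * π * r * a)) := by
        gcongr
        refine (setLIntegral_closedBall_exp_neg_le volume (a := a) hε).trans ?_
        rw [Complex.volume_closedBall_eq_ofReal 0 hr.le]
        gcongr
        exact Complex.volume_closedBall_zero_diff_ball_le ha har
    _ = _ := by
        rw [← ENNReal.ofReal_mul (by positivity),
          ← ENNReal.ofReal_add (by positivity) (by positivity),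
          ← ENNReal.ofReal_mul (by positivity)]
        congr 1
        field_simp

theorem tendsto_pi_mul_exp_neg_mul_sqrt_add_div {ε : ℝ} (hε : 0 < ε) :
    Tendsto (fun r : ℝ => π * rexp (-ε * √r) + 2 * π * √r / r) atTop (𝓝 0) := by
  have hexp : Tendsto (fun r : ℝ => rexp (-ε * √r)) atTop (𝓝 0) := by
    simpa only [neg_mul, Function.comp_def] using
      tendsto_exp_neg_atTop_nhds_zero.comp (tendsto_sqrt_atTop.const_mul_atTop hε)
  have hdiv : Tendsto (fun r : ℝ => 2 * π * √r / r) atTop (𝓝 0) := by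
    simp_rw [mul_div_assoc, sqrt_div_self']
    simpa using (tendsto_sqrt_atTop.const_div_atTop 1).const_mul (2 * π)
  simpa using (hexp.const_mul π).add hdiv

theorem tendsto_setLIntegral_norm_le_setLIntegral_norm_ge {δ : ℝ} (hδ : 0 < δ) :
    Tendsto (fun r : ℝ =>
        ∫⁻ z in {z : ℂ | ‖z‖ ≤ r}, ∫⁻ w in {w : ℂ | r ≤ ‖w‖},
          ENNReal.ofReal (‖w‖⁻¹ ^ 2 * rexp (-δ * ‖z - w‖)))
      atTop (𝓝 0) := by
  set C := ∫⁻ u : ℂ, ENNReal.ofReal (rexp (-(δ / 2) * ‖u‖))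
  have hC : C ≠ ⊤ := (Complex.integrable_exp_neg_mul_norm (half_pos hδ)).lintegral_lt_top.ne
  have hbound : ∀ᶠ r : ℝ in atTop,
      ∫⁻ z in {z : ℂ | ‖z‖ ≤ r}, ∫⁻ w in {w : ℂ | r ≤ ‖w‖},
          ENNReal.ofReal (‖w‖⁻¹ ^ 2 * rexp (-δ * ‖z - w‖)) ≤
        C * ENNReal.ofReal (π * rexp (-(δ / 2) * √r) + 2 * π * √r / r) := by
    filter_upwards [eventually_ge_atTop 1] with r hr
    have hball : {z : ℂ | ‖z‖ ≤ r} = closedBall 0 r := by ext; simp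
    calc _ ≤ ∫⁻ z in closedBall (0 : ℂ) r,
          ENNReal.ofReal (r⁻¹ ^ 2 * rexp (-(δ / 2) * (r - ‖z‖))) * C := by
          rw [hball]
          exact lintegral_mono fun z =>
            setLIntegral_norm_ge_inv_sq_mul_exp_le volume hδ.le (by linarith) z
      _ ≤ _ := by
          rw [lintegral_mul_const' _ _ hC, mul_comm]
          gcongr
          exact Complex.setLIntegral_closedBall_inv_sq_mul_exp_le (by positivity) (by linarith)
            (sqrt_nonneg r) (sqrt_le_self_iff.2 (.inr hr))
  have hupper : Tendsto (fun r : ℝ =>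
      C * ENNReal.ofReal (π * rexp (-(δ / 2) * √r) + 2 * π * √r / r)) atTop (𝓝 0) := by
    simpa using ENNReal.Tendsto.const_mul
      (ENNReal.tendsto_ofReal (tendsto_pi_mul_exp_neg_mul_sqrt_add_div (half_pos hδ))) (.inr hC)
  exact tendsto_of_tendsto_of_tendsto_of_le_of_le' tendsto_const_nhds hupper
    (.of_forall fun _ => zero_le) hbound

/-- For every `δ > 0`,
`lim_{n→∞} ∫_{|z|≤n} ∫_{|w|≥n} |w|⁻² e^(−δ|z−w|) dλ(w) dλ(z) = 0`. -/
theorem stmt9 (δ : ℝ) (hδ : 0 < δ) :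
    Tendsto (fun n : ℕ =>
        ∫⁻ z in {z : ℂ | ‖z‖ ≤ n},
          ∫⁻ w in {w : ℂ | (n : ℝ) ≤ ‖w‖},
            ENNReal.ofReal
              (‖w‖ ⁻¹ ^ 2 * Real.exp (-δ * ‖z - w‖)))
      atTop (nhds 0) :=
  (tendsto_setLIntegral_norm_le_setLIntegral_norm_ge hδ).comp tendsto_natCast_atTop_atTop
end

section
/- For every δ > 0 there exists a constant C > 0, depending only on δ, such that for every C²-smooth compactly supported function φ: ℂ → ℝ, ∬_{ℂ×ℂ} |φ(z) − φ(w)|² e^{−δ|z−w|} dλ(z) dλ(w) ≤ C ∫_ℂ ‖∇φ(w)‖² dλ(w), where ‖∇φ(w)‖ is the Euclidean norm of the gradient of φ at w (viewing ℂ as ℝ²). -/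
/-!
For `C¹` functions, `|φ z - φ w| ≤ |z - w| ∫₀¹ ‖∇φ (w + t (z - w))‖ dt`, hence by Cauchy–Schwarz
`|φ z - φ w|² ≤ |z - w|² ∫₀¹ ‖∇φ (w + t (z - w))‖² dt`. Integrating against a weight `ρ (z - w)`
in the variables `u = z - w` and `w`, translation invariance of Lebesgue measure turns the
`w`-integral of the right-hand side into `∫ ‖∇φ‖²`, so the double integral is at most
`(∫ |u|² ρ u du) ∫ ‖∇φ‖²`. For `ρ u = e^{-δ|u|}` the first factor is finite.
-/

open MeasureTheory Set ENNReal

lemma pow_mul_exp_neg_mul_le {x δ : ℝ} (hx : 0 ≤ x) (hδ : 0 < δ) (n : ℕ) :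
    x ^ n * Real.exp (-δ * x) ≤ n.factorial / δ ^ n := by
  have h := Real.pow_div_factorial_le_exp _ (mul_nonneg hδ.le hx) n
  rw [div_le_iff₀ (by positivity), mul_pow] at h
  rw [le_div_iff₀ (by positivity), neg_mul, Real.exp_neg]
  calc x ^ n * (Real.exp (δ * x))⁻¹ * δ ^ n
      = (δ ^ n * x ^ n) * (Real.exp (δ * x))⁻¹ := by ring
    _ ≤ (Real.exp (δ * x) * n.factorial) * (Real.exp (δ * x))⁻¹ := by gcongr
    _ = n.factorial := by field_simp

lemma integrable_pow_norm_mul_exp_neg_mul_norm {E : Type*} [NormedAddCommGroup E]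
    [MeasurableSpace E] [BorelSpace E] [SecondCountableTopology E]
    (μ : Measure E) [μ.HasTemperateGrowth] {δ : ℝ} (hδ : 0 < δ) (k : ℕ) :
    Integrable (fun x : E => ‖x‖ ^ k * Real.exp (-δ * ‖x‖)) μ := by
  have h := integrable_of_le_of_pow_mul_le (μ := μ) (f := fun x : E => Real.exp (-δ * ‖x‖))
    (C₁ := 1) (C₂ := (k + μ.integrablePower).factorial / δ ^ (k + μ.integrablePower)) (k := k)
    (fun x => by
      rw [Real.norm_eq_abs, abs_of_pos (Real.exp_pos _), Real.exp_le_one_iff]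
      nlinarith [norm_nonneg x])
    (fun x => by
      rw [Real.norm_eq_abs, abs_of_pos (Real.exp_pos _)]
      exact pow_mul_exp_neg_mul_le (norm_nonneg x) hδ _)
    (by fun_prop)
  simpa only [Real.norm_eq_abs, abs_of_pos (Real.exp_pos _)] using h

lemma sq_lintegral_le_lintegral_sq {α : Type*} [MeasurableSpace α] {μ : Measure α}
    [IsProbabilityMeasure μ] {f : α → ℝ≥0∞} (hf : AEMeasurable f μ) :
    (∫⁻ a, f a ∂μ) ^ 2 ≤ ∫⁻ a, f a ^ 2 ∂μ := by
  have h := ENNReal.lintegral_mul_le_Lp_mul_Lq μ Real.HolderConjugate.two_two hf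
    aemeasurable_const (g := 1)
  simp only [Pi.mul_apply, Pi.one_apply, mul_one, ENNReal.one_rpow, lintegral_const,
    measure_univ] at h
  calc (∫⁻ a, f a ∂μ) ^ 2 ≤ ((∫⁻ a, f a ^ (2 : ℝ) ∂μ) ^ (1 / 2 : ℝ)) ^ (2 : ℝ) := by
        rw [← ENNReal.rpow_natCast]; exact ENNReal.rpow_le_rpow h (by norm_num)
    _ = ∫⁻ a, f a ^ 2 ∂μ := by
        rw [← ENNReal.rpow_mul]; norm_num

lemma lintegral_lintegral_add_eq_measure_univ_mul {G α : Type*} [AddGroup G] [MeasurableSpace G]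
    [MeasurableAdd₂ G] [MeasurableSpace α] (μ : Measure G) [SFinite μ] [μ.IsAddRightInvariant]
    (ν : Measure α) [SFinite ν] {g : G → ℝ≥0∞} (hg : Measurable g) {v : α → G}
    (hv : Measurable v) :
    ∫⁻ w, ∫⁻ a, g (w + v a) ∂ν ∂μ = ν univ * ∫⁻ w, g w ∂μ := by
  rw [lintegral_lintegral_swap (f := fun w a => g (w + v a))
    (hg.comp (measurable_fst.add (hv.comp measurable_snd))).aemeasurable]
  simp_rw [lintegral_add_right_eq_self g]
  rw [lintegral_const, mul_comm]

section

variable {E F : Type*} [NormedAddCommGroup E] [NormedSpace ℝ E]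
  [NormedAddCommGroup F] [NormedSpace ℝ F] [CompleteSpace F]

lemma enorm_sub_le_lintegral_enorm_fderiv_mul {φ : E → F} (hφ : ContDiff ℝ 1 φ) (z w : E) :
    ‖φ z - φ w‖ₑ ≤ (∫⁻ t in Ioc (0 : ℝ) 1, ‖fderiv ℝ φ (w + t • (z - w))‖ₑ) * ‖z - w‖ₑ := by
  have hderiv : ∀ t : ℝ, HasDerivAt (fun s : ℝ => φ (w + s • (z - w)))
      (fderiv ℝ φ (w + t • (z - w)) (z - w)) t := fun t =>
    (hφ.differentiable one_ne_zero _).hasFDerivAt.comp_hasDerivAt t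
      (((hasDerivAt_id t).smul_const (z - w)).const_add w |>.congr_deriv (one_smul _ _))
  have hcont : Continuous fun t : ℝ => fderiv ℝ φ (w + t • (z - w)) :=
    (hφ.continuous_fderiv one_ne_zero).comp (by fun_prop)
  have hFTC : ∫ t in Ioc (0 : ℝ) 1, fderiv ℝ φ (w + t • (z - w)) (z - w) = φ z - φ w := by
    rw [← intervalIntegral.integral_of_le zero_le_one,
      intervalIntegral.integral_eq_sub_of_hasDerivAt (fun t _ => hderiv t)
        ((hcont.clm_apply continuous_const).intervalIntegrable 0 1)]
    simp
  calc ‖φ z - φ w‖ₑ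
      ≤ ∫⁻ t in Ioc (0 : ℝ) 1, ‖fderiv ℝ φ (w + t • (z - w)) (z - w)‖ₑ :=
        hFTC ▸ enorm_integral_le_lintegral_enorm _
    _ ≤ ∫⁻ t in Ioc (0 : ℝ) 1, ‖fderiv ℝ φ (w + t • (z - w))‖ₑ * ‖z - w‖ₑ :=
        lintegral_mono fun t => ContinuousLinearMap.le_opENorm _ _
    _ = _ := lintegral_mul_const _ hcont.enorm.measurable

lemma enorm_sub_sq_le_lintegral_enorm_fderiv_sq_mul {φ : E → F} (hφ : ContDiff ℝ 1 φ)
    (z w : E) :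
    ‖φ z - φ w‖ₑ ^ 2 ≤
      (∫⁻ t in Ioc (0 : ℝ) 1, ‖fderiv ℝ φ (w + t • (z - w))‖ₑ ^ 2) * ‖z - w‖ₑ ^ 2 := by
  have : IsProbabilityMeasure (volume.restrict (Ioc (0 : ℝ) 1)) := ⟨by simp⟩
  have hmeas : Measurable fun t : ℝ => ‖fderiv ℝ φ (w + t • (z - w))‖ₑ :=
    ((hφ.continuous_fderiv one_ne_zero).comp (by fun_prop)).enorm.measurable
  calc ‖φ z - φ w‖ₑ ^ 2
      ≤ ((∫⁻ t in Ioc (0 : ℝ) 1, ‖fderiv ℝ φ (w + t • (z - w))‖ₑ) * ‖z - w‖ₑ) ^ 2 := by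
        gcongr; exact enorm_sub_le_lintegral_enorm_fderiv_mul hφ z w
    _ ≤ _ := by
        rw [mul_pow]; gcongr; exact sq_lintegral_le_lintegral_sq hmeas.aemeasurable

theorem lintegral_enorm_sub_sq_mul_le [MeasurableSpace E] [BorelSpace E]
    [SecondCountableTopology E] (μ : Measure E) [SFinite μ] [μ.IsAddRightInvariant]
    {φ : E → F} (hφ : ContDiff ℝ 1 φ) {ρ : E → ℝ≥0∞} (hρ : Measurable ρ) :
    ∫⁻ x, ‖φ x.1 - φ x.2‖ₑ ^ 2 * ρ (x.1 - x.2) ∂(μ.prod μ) ≤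
      (∫⁻ u, ‖u‖ₑ ^ 2 * ρ u ∂μ) * ∫⁻ w, ‖fderiv ℝ φ w‖ₑ ^ 2 ∂μ := by
  set g : E → ℝ≥0∞ := fun w => ‖fderiv ℝ φ w‖ₑ ^ 2
  have hg : Measurable g := (hφ.continuous_fderiv one_ne_zero).enorm.measurable.pow_const 2
  have hk : Measurable fun u : E => ‖u‖ₑ ^ 2 * ρ u := (measurable_enorm.pow_const 2).mul hρ
  set S : E × E → ℝ≥0∞ := fun p => ∫⁻ t in Ioc (0 : ℝ) 1, g (p.2 + t • p.1)
  have hS : Measurable S :=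
    Measurable.lintegral_prod_right' (f := fun q : (E × E) × ℝ => g (q.1.2 + q.2 • q.1.1))
      (hg.comp (by fun_prop : Continuous fun q : (E × E) × ℝ => q.1.2 + q.2 • q.1.1).measurable)
  have hH : Measurable fun p : E × E => ‖p.1‖ₑ ^ 2 * ρ p.1 * S p :=
    (hk.comp measurable_fst).mul hS
  have : IsProbabilityMeasure (volume.restrict (Ioc (0 : ℝ) 1)) := ⟨by simp⟩
  calc ∫⁻ x, ‖φ x.1 - φ x.2‖ₑ ^ 2 * ρ (x.1 - x.2) ∂(μ.prod μ)
      ≤ ∫⁻ x, ‖x.1 - x.2‖ₑ ^ 2 * ρ (x.1 - x.2) * S (x.1 - x.2, x.2) ∂(μ.prod μ) :=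
        lintegral_mono fun x => by
          rw [mul_right_comm, mul_comm _ (S _)]
          exact mul_le_mul_left (enorm_sub_sq_le_lintegral_enorm_fderiv_sq_mul hφ x.1 x.2) _
    _ = ∫⁻ u, ∫⁻ w, ‖u‖ₑ ^ 2 * ρ u * S (u, w) ∂μ ∂μ := by
        rw [(measurePreserving_sub_prod μ μ).lintegral_comp hH, lintegral_prod _ hH.aemeasurable]
    _ = ∫⁻ u, ‖u‖ₑ ^ 2 * ρ u * ∫⁻ w, g w ∂μ ∂μ := by
        refine lintegral_congr fun u => ?_
        have hSu : Measurable fun w => S (u, w) := hS.comp measurable_prodMk_left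
        rw [lintegral_const_mul _ hSu]
        congr 1
        exact (lintegral_lintegral_add_eq_measure_univ_mul μ _ hg
          (measurable_id.smul_const u : Measurable fun t : ℝ => t • u)).trans (by simp)
    _ = _ := lintegral_mul_const _ hk

end

/-- For every `δ > 0` there is `C > 0`, depending only on `δ`, such that for
every `C²`-smooth compactly supported `φ : ℂ → ℝ`,
`∬ |φ(z) − φ(w)|² e^(−δ|z−w|) dλ dλ ≤ C ∫ ‖∇φ(w)‖² dλ(w)`
(the gradient norm being the norm of the Fréchet derivative, `ℂ ≅ ℝ²` Euclidean). -/
theorem stmt10 (δ : ℝ) (hδ : 0 < δ) :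
    ∃ C > (0 : ℝ), ∀ φ : ℂ → ℝ, ContDiff ℝ 2 φ → HasCompactSupport φ →
      (∫⁻ x : ℂ × ℂ,
          ENNReal.ofReal (|φ x.1 - φ x.2| ^ 2 * Real.exp (-δ * ‖x.1 - x.2‖))) ≤
        ENNReal.ofReal (C * ∫ w : ℂ, ‖fderiv ℝ φ w‖ ^ 2) := by
  have hK := integrable_pow_norm_mul_exp_neg_mul_norm (volume : Measure ℂ) hδ 2
  have hK0 : 0 ≤ ∫ u : ℂ, ‖u‖ ^ 2 * Real.exp (-δ * ‖u‖) := integral_nonneg fun u => by positivity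
  refine ⟨(∫ u : ℂ, ‖u‖ ^ 2 * Real.exp (-δ * ‖u‖)) + 1, by linarith, fun φ hφ hsupp => ?_⟩
  have hfc : Continuous (fderiv ℝ φ) := hφ.continuous_fderiv two_ne_zero
  have hcs : HasCompactSupport fun w => ‖fderiv ℝ φ w‖ ^ 2 :=
    (hsupp.fderiv ℝ).comp_left (g := fun y => ‖y‖ ^ 2) (by simp)
  have hgrad : Integrable fun w => ‖fderiv ℝ φ w‖ ^ 2 :=
    (hfc.norm.pow 2).integrable_of_hasCompactSupport hcs
  calc (∫⁻ x : ℂ × ℂ, ENNReal.ofReal (|φ x.1 - φ x.2| ^ 2 * Real.exp (-δ * ‖x.1 - x.2‖)))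
      = ∫⁻ x, ‖φ x.1 - φ x.2‖ₑ ^ 2 * ENNReal.ofReal (Real.exp (-δ * ‖x.1 - x.2‖))
          ∂(volume.prod volume) := by
        rw [Measure.volume_eq_prod]
        refine lintegral_congr fun x => ?_
        rw [ENNReal.ofReal_mul (by positivity), ENNReal.ofReal_pow (abs_nonneg _),
          ← Real.enorm_eq_ofReal_abs]
    _ ≤ (∫⁻ u, ‖u‖ₑ ^ 2 * ENNReal.ofReal (Real.exp (-δ * ‖u‖))) *
          ∫⁻ w, ‖fderiv ℝ φ w‖ₑ ^ 2 :=
        lintegral_enorm_sub_sq_mul_le volume (hφ.of_le one_le_two) (by fun_prop)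
    _ = ENNReal.ofReal (∫ u : ℂ, ‖u‖ ^ 2 * Real.exp (-δ * ‖u‖)) *
          ENNReal.ofReal (∫ w : ℂ, ‖fderiv ℝ φ w‖ ^ 2) := by
        rw [ofReal_integral_eq_lintegral_ofReal hK (ae_of_all _ fun u => by positivity),
          ofReal_integral_eq_lintegral_ofReal hgrad (ae_of_all _ fun w => by positivity)]
        congr 1 <;> refine lintegral_congr fun u => ?_
        · rw [ENNReal.ofReal_mul (by positivity), ENNReal.ofReal_pow (norm_nonneg _),
            ofReal_norm]
        · rw [ENNReal.ofReal_pow (norm_nonneg _), ofReal_norm]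
    _ ≤ _ := by
        rw [ENNReal.ofReal_mul (by positivity)]
        gcongr
        linarith
end

section
/- For every r₀ > 0 and every ε with 0 < ε < 1, there exists a C²-smooth compactly supported function φ: ℝ → ℝ such that φ(r) = 1 for all r ∈ [0, r₀/2], |φ′(r)| ≤ ε/r for all r > 0, and ∫_0^∞ φ′(r)² r dr ≤ ε + ε² log 4. -/
open MeasureTheory Set

/-! The cutoff is `φ(r) = g(1 - c log (r / a))` with `a = r₀ / 2`, where `g` is a smooth
transition from `0` on `(-∞, 0]` to `1` on `[1, ∞)` with `|g'| ≤ M` and `M ≥ 1`. It equals `1`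
for `|r| ≤ a`, vanishes for `|r| ≥ a e^{1/c}`, and `|φ'(r)| ≤ c M / r`. Since `φ'(r)² r dr`
is `c g'(v)² dv` for `v = 1 - c log (r / a)`, the energy is `c ∫₀¹ g'² ≤ c M²`: spreading the
transition over a logarithmic scale makes it cheap, and `c = ε / M²` works. -/

noncomputable def logRamp (a c r : ℝ) : ℝ := 1 - c * Real.log (r / a)

section LogRamp

variable {a c : ℝ}

lemma logRamp_abs (ha : 0 < a) (r : ℝ) : logRamp a c |r| = logRamp a c r := by
  rw [logRamp, logRamp, show |r| / a = |r / a| by rw [abs_div, abs_of_pos ha], Real.log_abs]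

lemma logRamp_self (ha : a ≠ 0) : logRamp a c a = 1 := by
  simp [logRamp, ha]

lemma logRamp_mul_exp_inv (ha : a ≠ 0) (hc : c ≠ 0) : logRamp a c (a * Real.exp c⁻¹) = 0 := by
  simp [logRamp, ha, hc]

lemma one_le_logRamp (ha : 0 < a) (hc : 0 ≤ c) {r : ℝ} (hr : |r| ≤ a) : 1 ≤ logRamp a c r := by
  have hlog : Real.log (|r| / a) ≤ 0 := Real.log_nonpos (by positivity) ((div_le_one ha).2 hr)
  rw [← logRamp_abs ha, logRamp]
  nlinarith

lemma strictAntiOn_logRamp (ha : 0 < a) (hc : 0 < c) : StrictAntiOn (logRamp a c) (Ioi 0) := by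
  intro x hx y _ hxy
  have := Real.log_lt_log (div_pos hx ha) (div_lt_div_of_pos_right hxy ha)
  simp only [logRamp]
  nlinarith

lemma logRamp_mem_Icc_iff (ha : 0 < a) (hc : 0 < c) {r : ℝ} (hr : 0 < r) :
    logRamp a c r ∈ Icc 0 1 ↔ r ∈ Icc a (a * Real.exp c⁻¹) := by
  have hR : a * Real.exp c⁻¹ ∈ Ioi (0 : ℝ) := mul_pos ha (Real.exp_pos _)
  have anti := strictAntiOn_logRamp ha hc
  conv_lhs => rw [← logRamp_mul_exp_inv (c := c) ha.ne' hc.ne', ← logRamp_self (c := c) ha.ne']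
  rw [mem_Icc, mem_Icc, anti.le_iff_ge hR hr, anti.le_iff_ge hr ha, and_comm]

lemma hasDerivAt_logRamp (ha : a ≠ 0) {r : ℝ} (hr : r ≠ 0) :
    HasDerivAt (logRamp a c) (-(c / r)) r := by
  have h := ((((hasDerivAt_id r).div_const a).log (div_ne_zero hr ha)).const_mul c).const_sub 1
  rwa [show c * (1 / a / (id r / a)) = c / r by simp only [id]; field_simp] at h

lemma contDiffAt_logRamp {n : WithTop ℕ∞} (ha : a ≠ 0) {r : ℝ} (hr : r ≠ 0) :
    ContDiffAt ℝ n (logRamp a c) r :=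
  contDiffAt_const.sub <| contDiffAt_const.mul <|
    (Real.contDiffAt_log.2 (div_ne_zero hr ha)).comp r (contDiffAt_id.div_const a)

end LogRamp

lemma integral_sq_le_of_abs_le {f : ℝ → ℝ} {M : ℝ} (hM : ∀ x, |f x| ≤ M) :
    ∫ v in (0 : ℝ)..1, f v ^ 2 ≤ M ^ 2 := by
  have := intervalIntegral.norm_integral_le_of_norm_le_const (a := 0) (b := 1)
    (f := fun v => f v ^ 2) fun x _ => by simpa using pow_le_pow_left₀ (abs_nonneg _) (hM x) 2
  simpa using (le_abs_self _).trans this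

section Transition

variable {g : ℝ → ℝ} {a c : ℝ}

lemma deriv_eq_zero_of_notMem_Icc (hg0 : ∀ x ≤ 0, g x = 0) (hg1 : ∀ x, 1 ≤ x → g x = 1)
    {x : ℝ} (hx : x ∉ Icc 0 1) : deriv g x = 0 := by
  rcases not_and_or.1 hx with hx | hx
  · have : g =ᶠ[nhds x] fun _ => 0 := by
      filter_upwards [Iio_mem_nhds (not_le.1 hx)] with y hy using hg0 y hy.le
    simpa using this.deriv_eq
  · have : g =ᶠ[nhds x] fun _ => 1 := by
      filter_upwards [Ioi_mem_nhds (not_le.1 hx)] with y hy using hg1 y hy.le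
    simpa using this.deriv_eq

lemma exists_one_le_abs_deriv_le (hg : ContDiff ℝ 1 g) (hg0 : ∀ x ≤ 0, g x = 0)
    (hg1 : ∀ x, 1 ≤ x → g x = 1) : ∃ M, 1 ≤ M ∧ ∀ x, |deriv g x| ≤ M := by
  have hsupp : HasCompactSupport (deriv g) :=
    HasCompactSupport.intro isCompact_Icc fun x hx => deriv_eq_zero_of_notMem_Icc hg0 hg1 hx
  obtain ⟨C, hC⟩ := (hg.continuous_deriv le_rfl).bounded_above_of_compact_support hsupp
  exact ⟨max C 1, le_max_right _ _, fun x => (hC x).trans (le_max_left _ _)⟩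

lemma contDiff_comp_logRamp {n : WithTop ℕ∞} (hg : ContDiff ℝ n g) (hg1 : ∀ x, 1 ≤ x → g x = 1)
    (ha : 0 < a) (hc : 0 ≤ c) : ContDiff ℝ n (g ∘ logRamp a c) := by
  rw [contDiff_iff_contDiffAt]
  intro x
  rcases lt_or_ge |x| a with hx | hx
  · -- near `0` the function is identically `1`, which covers the singularity of `log`
    have : g ∘ logRamp a c =ᶠ[nhds x] fun _ => 1 := by
      filter_upwards [(isOpen_lt continuous_abs continuous_const).mem_nhds hx] with y hy
      exact hg1 _ (one_le_logRamp ha hc (le_of_lt hy))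
    exact contDiffAt_const.congr_of_eventuallyEq this
  · have hx0 : x ≠ 0 := abs_pos.1 (ha.trans_le hx)
    exact hg.contDiffAt.comp x (contDiffAt_logRamp ha.ne' hx0)

lemma hasCompactSupport_comp_logRamp (hg0 : ∀ x ≤ 0, g x = 0) (ha : 0 < a) (hc : 0 < c) :
    HasCompactSupport (g ∘ logRamp a c) := by
  refine HasCompactSupport.intro (isCompact_closedBall 0 (a * Real.exp c⁻¹)) fun x hx => hg0 _ ?_
  have hR : 0 < a * Real.exp c⁻¹ := mul_pos ha (Real.exp_pos _)
  have hxR : a * Real.exp c⁻¹ < |x| := by simpa using hx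
  rw [← logRamp_abs ha, ← logRamp_mul_exp_inv (c := c) ha.ne' hc.ne']
  exact (strictAntiOn_logRamp ha hc hR (hR.trans hxR) hxR).le

lemma deriv_comp_logRamp (hg : Differentiable ℝ g) (ha : a ≠ 0) {r : ℝ} (hr : r ≠ 0) :
    deriv (g ∘ logRamp a c) r = deriv g (logRamp a c r) * -(c / r) :=
  ((hg _).hasDerivAt.comp r (hasDerivAt_logRamp ha hr)).deriv

lemma abs_deriv_comp_logRamp_le (hg : Differentiable ℝ g) {M : ℝ} (hM : ∀ x, |deriv g x| ≤ M)
    (ha : a ≠ 0) (hc : 0 ≤ c) {r : ℝ} (hr : 0 < r) :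
    |deriv (g ∘ logRamp a c) r| ≤ M * c / r := by
  rw [deriv_comp_logRamp hg ha hr.ne', abs_mul, abs_neg, abs_div, abs_of_nonneg hc,
    abs_of_pos hr, mul_div_assoc]
  gcongr
  exact hM _

theorem integral_deriv_comp_logRamp_sq_mul (hg : ContDiff ℝ 1 g) (hg0 : ∀ x ≤ 0, g x = 0)
    (hg1 : ∀ x, 1 ≤ x → g x = 1) (ha : 0 < a) (hc : 0 < c) :
    ∫ r in Ioi 0, deriv (g ∘ logRamp a c) r ^ 2 * r = c * ∫ v in (0 : ℝ)..1, deriv g v ^ 2 := by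
  set R := a * Real.exp c⁻¹
  have haR : a ≤ R := le_mul_of_one_le_right ha.le (Real.one_le_exp (by positivity))
  have hdiff : Differentiable ℝ g := hg.differentiable one_ne_zero
  have hpos : ∀ r ∈ uIcc a R, 0 < r := fun r hr => ha.trans_le (uIcc_of_le haR ▸ hr).1
  calc ∫ r in Ioi 0, deriv (g ∘ logRamp a c) r ^ 2 * r
      = ∫ r in Icc a R, deriv (g ∘ logRamp a c) r ^ 2 * r := by
        refine setIntegral_eq_of_subset_of_forall_sdiff_eq_zero measurableSet_Ioi
          (fun r hr => ha.trans_le hr.1) ?_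
        rintro r ⟨hr0, hraR⟩
        rw [deriv_comp_logRamp hdiff ha.ne' (ne_of_gt hr0), deriv_eq_zero_of_notMem_Icc hg0 hg1
          (mt (logRamp_mem_Icc_iff ha hc hr0).1 hraR)]
        ring
    _ = ∫ r in a..R, ((fun v => -c * deriv g v ^ 2) ∘ logRamp a c) r * -(c / r) := by
        rw [integral_Icc_eq_integral_Ioc, ← intervalIntegral.integral_of_le haR]
        refine intervalIntegral.integral_congr fun r hr => ?_
        rw [Function.comp_apply, deriv_comp_logRamp hdiff ha.ne' (hpos r hr).ne']
        field_simp [(hpos r hr).ne']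
    _ = ∫ v in (1 : ℝ)..0, -c * deriv g v ^ 2 := by
        rw [intervalIntegral.integral_comp_mul_deriv (g := fun v => -c * deriv g v ^ 2)
          (fun r hr => hasDerivAt_logRamp ha.ne' (hpos r hr).ne')
          (continuousOn_const.div continuousOn_id fun r hr => (hpos r hr).ne').neg
          (continuous_const.mul ((hg.continuous_deriv le_rfl).pow 2)),
          logRamp_self ha.ne', logRamp_mul_exp_inv ha.ne' hc.ne']
    _ = c * ∫ v in (0 : ℝ)..1, deriv g v ^ 2 := by
        rw [intervalIntegral.integral_symm, intervalIntegral.integral_const_mul]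
        ring

end Transition

theorem stmt11_general (r₀ ε : ℝ) (hr : 0 < r₀) (hε : 0 < ε) :
    ∃ φ : ℝ → ℝ, ContDiff ℝ 2 φ ∧ HasCompactSupport φ ∧
      (∀ r ∈ Set.Icc (0 : ℝ) (r₀ / 2), φ r = 1) ∧
      (∀ r > (0 : ℝ), |deriv φ r| ≤ ε / r) ∧
      (∫ r in Set.Ioi (0 : ℝ), (deriv φ r) ^ 2 * r) ≤ ε + ε ^ 2 * Real.log 4 := by
  set g := Real.smoothTransition
  have hg : ∀ n : ℕ∞, ContDiff ℝ n g := fun n => Real.smoothTransition.contDiff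
  have hg0 : ∀ x ≤ 0, g x = 0 := fun _ => Real.smoothTransition.zero_of_nonpos
  have hg1 : ∀ x, 1 ≤ x → g x = 1 := fun _ => Real.smoothTransition.one_of_one_le
  obtain ⟨M, hM1, hM⟩ := exists_one_le_abs_deriv_le (hg 1) hg0 hg1
  have ha : 0 < r₀ / 2 := by positivity
  have hc : 0 < ε / M ^ 2 := by positivity
  refine ⟨g ∘ logRamp (r₀ / 2) (ε / M ^ 2), contDiff_comp_logRamp (hg 2) hg1 ha hc.le,
    hasCompactSupport_comp_logRamp hg0 ha hc,
    fun r hr => hg1 _ (one_le_logRamp ha hc.le (by rw [abs_of_nonneg hr.1]; exact hr.2)),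
    fun r hr => ?_, ?_⟩
  · calc |deriv (g ∘ logRamp (r₀ / 2) (ε / M ^ 2)) r| ≤ M * (ε / M ^ 2) / r :=
          abs_deriv_comp_logRamp_le ((hg 1).differentiable one_ne_zero) hM ha.ne' hc.le hr
      _ ≤ ε / r := by
          gcongr
          rw [pow_two, ← div_div, mul_div_cancel₀ _ (by positivity)]
          exact div_le_self hε.le hM1
  · rw [integral_deriv_comp_logRamp_sq_mul (hg 1) hg0 hg1 ha hc]
    calc ε / M ^ 2 * ∫ v in (0 : ℝ)..1, deriv g v ^ 2 ≤ ε / M ^ 2 * M ^ 2 := by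
          gcongr
          exact integral_sq_le_of_abs_le hM
      _ = ε := div_mul_cancel₀ _ (by positivity)
      _ ≤ ε + ε ^ 2 * Real.log 4 := le_add_of_nonneg_right (by positivity)

/-- For every `r₀ > 0` and `0 < ε < 1` there is a `C²`-smooth compactly
supported `φ : ℝ → ℝ` with `φ ≡ 1` on `[0, r₀/2]`, `|φ'(r)| ≤ ε/r` for all `r > 0`, and
`∫₀^∞ φ'(r)² r dr ≤ ε + ε² log 4`. -/
theorem stmt11 (r₀ ε : ℝ) (hr : 0 < r₀) (hε : 0 < ε) (hε1 : ε < 1) :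
    ∃ φ : ℝ → ℝ, ContDiff ℝ 2 φ ∧ HasCompactSupport φ ∧
      (∀ r ∈ Set.Icc (0 : ℝ) (r₀ / 2), φ r = 1) ∧
      (∀ r > (0 : ℝ), |deriv φ r| ≤ ε / r) ∧
      (∫ r in Set.Ioi (0 : ℝ), (deriv φ r) ^ 2 * r) ≤ ε + ε ^ 2 * Real.log 4 :=
  stmt11_general r₀ ε hr hε
end

section
/- Let (E, μ), Π be as in the kernel setting, let 0 < ε ≤ 1 ≤ M, and let g: E → ℝ be measurable with ε ≤ g ≤ M, L(g) < ∞ and V(g) < ∞. Let (E_n)_{n≥1} be an increasing sequence of measurable subsets of E with ∪_n E_n = E such that lim_{n→∞} ∫_{E_n} (∫_{E \ E_n} |g(x) − 1|² |Π(x,y)|² dμ(x)) dμ(y) = 0. Define g_n = 1 + (g − 1)·χ_{E_n}. Then L(g_n/g) → 0 and V(g_n/g) → 0 as n → ∞. -/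
/-!
Off `E_n` the quotient `g_n / g` equals `1 / g`, on `E_n` it equals `1`, and `x ↦ 1 / x` is
`ε⁻²`-Lipschitz on `[ε, ∞)`. Hence `L(g_n / g)` is at most `ε⁻⁶` times the integral defining
`L(g)` restricted to `E ∖ E_n`, while `V(g_n / g)` is at most `ε⁻⁴` times the integral defining
`V(g)` over `(E ∖ E_n) × E` plus twice the cut integral of the hypothesis; the two mixed regions
`E_n × (E ∖ E_n)` and `(E ∖ E_n) × E_n` contribute equally because `|Π(x,y)| = |Π(y,x)|`.
Tails of finite integrals along an exhaustion tend to `0`.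
-/

open MeasureTheory Filter Set
open scoped ENNReal Topology

/-- `L(g) = ∫_E |g(x) − 1|³ Π(x,x) dμ(x)` (the diagonal `Π(x,x)` being real). -/
noncomputable def kernelL {E : Type*} [MeasurableSpace E] (μ : Measure E)
    (K : E → E → ℂ) (g : E → ℝ) : ℝ≥0∞ :=
  ∫⁻ x, ENNReal.ofReal (|g x - 1| ^ 3 * (K x x).re) ∂μ

/-- `V(g) = ∬_{E×E} |g(x) − g(y)|² |Π(x,y)|² dμ(x) dμ(y)`. -/
noncomputable def kernelV {E : Type*} [MeasurableSpace E] (μ : Measure E)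
    (K : E → E → ℂ) (g : E → ℝ) : ℝ≥0∞ :=
  ∫⁻ x : E × E,
    ENNReal.ofReal (|g x.1 - g x.2| ^ 2 * ‖K x.1 x.2‖ ^ 2) ∂(μ.prod μ)

theorem abs_inv_sub_inv_le {ε a b : ℝ} (hε : 0 < ε) (ha : ε ≤ a) (hb : ε ≤ b) :
    |a⁻¹ - b⁻¹| ≤ (ε ^ 2)⁻¹ * |a - b| := by
  have ha₀ := hε.trans_le ha
  have hb₀ := hε.trans_le hb
  rw [inv_sub_inv ha₀.ne' hb₀.ne', abs_div, abs_sub_comm, abs_of_pos (mul_pos ha₀ hb₀),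
    div_eq_inv_mul]
  gcongr
  rw [sq]
  gcongr

theorem ENNReal.ofReal_abs_pow_mul_le {u t c r : ℝ} (hc : 0 ≤ c) (h : |u| ≤ c * |t|) (m : ℕ) :
    ENNReal.ofReal (|u| ^ m * r) ≤ ENNReal.ofReal (c ^ m) * ENNReal.ofReal (|t| ^ m * r) := by
  rw [← ENNReal.ofReal_mul (pow_nonneg hc m)]
  rcases le_or_gt r 0 with hr | hr
  · rw [ENNReal.ofReal_of_nonpos (mul_nonpos_of_nonneg_of_nonpos (by positivity) hr)]
    exact zero_le
  · rw [← mul_assoc, ← mul_pow]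
    gcongr

theorem ENNReal.tendsto_zero_of_le_const_mul {ι : Type*} {l : Filter ι} {u v : ι → ℝ≥0∞}
    {c : ℝ≥0∞} (hc : c ≠ ∞) (hv : Tendsto v l (𝓝 0)) (huv : ∀ i, u i ≤ c * v i) :
    Tendsto u l (𝓝 0) := by
  have hcv : Tendsto (fun i => c * v i) l (𝓝 0) := by
    simpa using ENNReal.Tendsto.const_mul hv (Or.inr hc)
  exact tendsto_of_tendsto_of_tendsto_of_le_of_le tendsto_const_nhds hcv (fun _ => zero_le) huv

theorem tendsto_setLIntegral_compl_of_monotone {α ι : Type*} [MeasurableSpace α] [Preorder ι]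
    [Nonempty ι] [IsCountablyGenerated (atTop : Filter ι)] {ν : Measure α} {f : α → ℝ≥0∞}
    (hf : ∫⁻ x, f x ∂ν ≠ ∞) {S : ι → Set α} (hS : ∀ i, MeasurableSet (S i))
    (hmono : Monotone S) (hunion : ⋃ i, S i = univ) :
    Tendsto (fun i => ∫⁻ x in (S i)ᶜ, f x ∂ν) atTop (𝓝 0) := by
  have hfin : ∃ i, ν.withDensity f (S i)ᶜ ≠ ∞ := by
    obtain ⟨i⟩ := ‹Nonempty ι›
    refine ⟨i, ?_⟩
    rw [withDensity_apply _ (hS i).compl]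
    exact ne_top_of_le_ne_top hf (setLIntegral_le_lintegral _ _)
  have key := tendsto_measure_iInter_atTop (μ := ν.withDensity f) (s := fun i => (S i)ᶜ)
    (fun i => (hS i).compl.nullMeasurableSet) (fun i j h => compl_subset_compl.2 (hmono h)) hfin
  rw [← compl_iUnion, hunion, compl_univ, measure_empty] at key
  simpa only [Function.comp_def, withDensity_apply _ (hS _).compl] using key

section Cutoff

variable {E : Type*} {K : E → E → ℂ} {g q : E → ℝ} {S : Set E} {ε : ℝ}

theorem ofReal_cutoff_sq_mul_le (hε : 0 < ε) (hε1 : ε ≤ 1) (hg : ∀ x, ε ≤ g x)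
    (hq₁ : ∀ x ∈ S, q x = 1) (hq₂ : ∀ x ∉ S, q x = (g x)⁻¹)
    (hK : ∀ x y, ‖K y x‖ = ‖K x y‖) (x y : E) :
    ENNReal.ofReal (|q x - q y| ^ 2 * ‖K x y‖ ^ 2) ≤ ENNReal.ofReal ((ε ^ 2)⁻¹ ^ 2) *
      ((S ×ˢ univ)ᶜ.indicator
          (fun p => ENNReal.ofReal (|g p.1 - g p.2| ^ 2 * ‖K p.1 p.2‖ ^ 2)) (x, y) +
        (Sᶜ ×ˢ S).indicator (fun p => ENNReal.ofReal (|g p.1 - 1| ^ 2 * ‖K p.1 p.2‖ ^ 2)) (x, y) +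
        (Sᶜ ×ˢ S).indicator
          (fun p => ENNReal.ofReal (|g p.1 - 1| ^ 2 * ‖K p.1 p.2‖ ^ 2)) (y, x)) := by
  have hc : 0 ≤ (ε ^ 2)⁻¹ := by positivity
  by_cases hx : x ∈ S <;> by_cases hy : y ∈ S
  · simp [hq₁ x hx, hq₁ y hy]
  · rw [hq₁ x hx, hq₂ y hy]
    refine (ENNReal.ofReal_abs_pow_mul_le (t := g y - 1) hc ?_ 2).trans ?_
    · simpa [abs_sub_comm] using abs_inv_sub_inv_le hε (hg y) hε1
    · simp [hx, hy, hK x y]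
  · rw [hq₂ x hx, hq₁ y hy]
    refine (ENNReal.ofReal_abs_pow_mul_le (t := g x - 1) hc ?_ 2).trans ?_
    · simpa using abs_inv_sub_inv_le hε (hg x) hε1
    · gcongr
      exact le_add_right (le_add_left (by simp [hx, hy]))
  · rw [hq₂ x hx, hq₂ y hy]
    refine (ENNReal.ofReal_abs_pow_mul_le hc (abs_inv_sub_inv_le hε (hg x) (hg y)) 2).trans ?_
    simp [hx, hy]

variable [MeasurableSpace E] {μ : Measure E}

theorem kernelL_cutoff_le (hS : MeasurableSet S) (hε : 0 < ε) (hε1 : ε ≤ 1)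
    (hg : ∀ x, ε ≤ g x) (hq₁ : ∀ x ∈ S, q x = 1) (hq₂ : ∀ x ∉ S, q x = (g x)⁻¹) :
    kernelL μ K q ≤ ENNReal.ofReal ((ε ^ 2)⁻¹ ^ 3) *
      ∫⁻ x in Sᶜ, ENNReal.ofReal (|g x - 1| ^ 3 * (K x x).re) ∂μ := by
  have hS₀ : ∫⁻ x in S, ENNReal.ofReal (|q x - 1| ^ 3 * (K x x).re) ∂μ = 0 := by
    rw [setLIntegral_congr_fun (g := fun _ => 0) hS fun x hx => by simp [hq₁ x hx],
      lintegral_zero]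
  rw [kernelL, ← lintegral_add_compl _ hS, hS₀, zero_add,
    ← lintegral_const_mul' _ _ ENNReal.ofReal_ne_top]
  refine setLIntegral_mono' hS.compl fun x hx =>
    ENNReal.ofReal_abs_pow_mul_le (by positivity) ?_ 3
  simpa [hq₂ x hx] using abs_inv_sub_inv_le hε (hg x) hε1

theorem kernelV_cutoff_le [SFinite μ] (hK : Measurable (Function.uncurry K))
    (hK_symm : ∀ x y, ‖K y x‖ = ‖K x y‖) (hg_meas : Measurable g) (hS : MeasurableSet S)
    (hε : 0 < ε) (hε1 : ε ≤ 1) (hg : ∀ x, ε ≤ g x) (hq₁ : ∀ x ∈ S, q x = 1)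
    (hq₂ : ∀ x ∉ S, q x = (g x)⁻¹) :
    kernelV μ K q ≤ ENNReal.ofReal ((ε ^ 2)⁻¹ ^ 2) *
      (∫⁻ p in (S ×ˢ univ)ᶜ, ENNReal.ofReal (|g p.1 - g p.2| ^ 2 * ‖K p.1 p.2‖ ^ 2) ∂μ.prod μ +
        2 * ∫⁻ y in S, ∫⁻ x in Sᶜ, ENNReal.ofReal (|g x - 1| ^ 2 * ‖K x y‖ ^ 2) ∂μ ∂μ) := by
  set F : E × E → ℝ≥0∞ := fun p => ENNReal.ofReal (|g p.1 - g p.2| ^ 2 * ‖K p.1 p.2‖ ^ 2)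
  set G : E × E → ℝ≥0∞ := fun p => ENNReal.ofReal (|g p.1 - 1| ^ 2 * ‖K p.1 p.2‖ ^ 2)
  have hnorm : Measurable fun p : E × E => ‖K p.1 p.2‖ ^ 2 := hK.norm.pow_const 2
  have hF : Measurable F := ((hg_meas.comp measurable_fst).sub
    (hg_meas.comp measurable_snd)).abs.pow_const 2 |>.mul hnorm |>.ennreal_ofReal
  have hG : Measurable G := ((hg_meas.comp measurable_fst).sub_const 1).abs.pow_const 2
    |>.mul hnorm |>.ennreal_ofReal
  have hcross : ∫⁻ p, (Sᶜ ×ˢ S).indicator G p ∂μ.prod μ =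
      ∫⁻ y in S, ∫⁻ x in Sᶜ, G (x, y) ∂μ ∂μ := by
    rw [lintegral_indicator (hS.compl.prod hS), setLIntegral_prod_symm _ hG.aemeasurable]
  calc kernelV μ K q
      ≤ ∫⁻ p, ENNReal.ofReal ((ε ^ 2)⁻¹ ^ 2) *
          ((S ×ˢ univ)ᶜ.indicator F p + (Sᶜ ×ˢ S).indicator G p +
            (Sᶜ ×ˢ S).indicator G p.swap) ∂μ.prod μ :=
        lintegral_mono fun p => ofReal_cutoff_sq_mul_le hε hε1 hg hq₁ hq₂ hK_symm p.1 p.2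
    _ = _ := by
        rw [lintegral_const_mul' _ _ ENNReal.ofReal_ne_top,
          lintegral_add_left (f := fun p => (S ×ˢ univ)ᶜ.indicator F p + (Sᶜ ×ˢ S).indicator G p)
            ((hF.indicator ((hS.prod .univ).compl)).add (hG.indicator (hS.compl.prod hS))),
          lintegral_add_left (hF.indicator ((hS.prod .univ).compl)),
          lintegral_prod_swap ((Sᶜ ×ˢ S).indicator G), hcross,
          lintegral_indicator ((hS.prod .univ).compl), two_mul, add_assoc]

end Cutoff

theorem stmt15_general {E : Type*} [MeasurableSpace E] (μ : Measure E) [SigmaFinite μ]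
    (K : E → E → ℂ) (hK : Measurable (Function.uncurry K))
    (hsymm : ∀ x y, K y x = (starRingEnd ℂ) (K x y))
    (ε M : ℝ) (hε : 0 < ε) (hε1 : ε ≤ 1)
    (g : E → ℝ) (hg : Measurable g) (hgb : ∀ x, ε ≤ g x ∧ g x ≤ M)
    (hL : kernelL μ K g < ⊤) (hV : kernelV μ K g < ⊤)
    (En : ℕ → Set E) (hEnMeas : ∀ n, MeasurableSet (En n))
    (hEnMono : Monotone En) (hEnUnion : (⋃ n, En n) = Set.univ)
    (hEnCut : Tendsto (fun n =>
        ∫⁻ y in En n, ∫⁻ x in (En n)ᶜ,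
          ENNReal.ofReal (|g x - 1| ^ 2 * ‖K x y‖ ^ 2) ∂μ ∂μ)
      atTop (nhds 0))
    (gn : ℕ → E → ℝ)
    (hgn : ∀ n x, gn n x = 1 + (En n).indicator (fun y => g y - 1) x) :
    Tendsto (fun n => kernelL μ K (fun x => gn n x / g x)) atTop (nhds 0) ∧
    Tendsto (fun n => kernelV μ K (fun x => gn n x / g x)) atTop (nhds 0) := by
  have hεg : ∀ x, ε ≤ g x := fun x => (hgb x).1
  have hq₁ : ∀ n, ∀ x ∈ En n, gn n x / g x = 1 := fun n x hx => by
    rw [hgn, indicator_of_mem hx, add_sub_cancel, div_self (hε.trans_le (hεg x)).ne']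
  have hq₂ : ∀ n, ∀ x ∉ En n, gn n x / g x = (g x)⁻¹ := fun n x hx => by
    rw [hgn, indicator_of_notMem hx, add_zero, one_div]
  have hK_symm : ∀ x y, ‖K y x‖ = ‖K x y‖ := fun x y => by rw [hsymm, Complex.norm_conj]
  refine ⟨ENNReal.tendsto_zero_of_le_const_mul ENNReal.ofReal_ne_top
      (tendsto_setLIntegral_compl_of_monotone hL.ne hEnMeas hEnMono hEnUnion)
      fun n => kernelL_cutoff_le (hEnMeas n) hε hε1 hεg (hq₁ n) (hq₂ n),
    ENNReal.tendsto_zero_of_le_const_mul ENNReal.ofReal_ne_top ?_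
      fun n => kernelV_cutoff_le hK hK_symm hg (hEnMeas n) hε hε1 hεg (hq₁ n) (hq₂ n)⟩
  have hfar := tendsto_setLIntegral_compl_of_monotone hV.ne
    (fun n => (hEnMeas n).prod .univ) (fun m n h => prod_mono (hEnMono h) le_rfl)
    (by rw [← iUnion_prod_const, hEnUnion, univ_prod_univ])
  simpa using hfar.add (ENNReal.Tendsto.const_mul hEnCut (Or.inr ENNReal.ofNat_ne_top))

/-- In the kernel setting, with `ε ≤ g ≤ M`, `L(g) < ∞`, `V(g) < ∞`, and an
increasing exhausting sequence `(E_n)` such that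
`∫_{E_n} ∫_{E∖E_n} |g(x)−1|² |Π(x,y)|² dμ(x) dμ(y) → 0`, the cut-offs
`g_n = 1 + (g−1)·χ_{E_n}` satisfy `L(g_n/g) → 0` and `V(g_n/g) → 0`. -/
theorem stmt15 {E : Type*} [MeasurableSpace E] (μ : Measure E) [SigmaFinite μ]
    (K : E → E → ℂ) (hK : Measurable (Function.uncurry K))
    (hsymm : ∀ x y, K y x = (starRingEnd ℂ) (K x y))
    (hrepr : ∀ᵐ x ∂μ, ENNReal.ofReal ((K x x).re) =
      ∫⁻ y, ENNReal.ofReal (‖K x y‖ ^ 2) ∂μ)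
    (ε M : ℝ) (hε : 0 < ε) (hε1 : ε ≤ 1) (hM : 1 ≤ M)
    (g : E → ℝ) (hg : Measurable g) (hgb : ∀ x, ε ≤ g x ∧ g x ≤ M)
    (hL : kernelL μ K g < ⊤) (hV : kernelV μ K g < ⊤)
    (En : ℕ → Set E) (hEnMeas : ∀ n, MeasurableSet (En n))
    (hEnMono : Monotone En) (hEnUnion : (⋃ n, En n) = Set.univ)
    (hEnCut : Tendsto (fun n =>
        ∫⁻ y in En n, ∫⁻ x in (En n)ᶜ,
          ENNReal.ofReal (|g x - 1| ^ 2 * ‖K x y‖ ^ 2) ∂μ ∂μ)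
      atTop (nhds 0))
    (gn : ℕ → E → ℝ)
    (hgn : ∀ n x, gn n x = 1 + (En n).indicator (fun y => g y - 1) x) :
    Tendsto (fun n => kernelL μ K (fun x => gn n x / g x)) atTop (nhds 0) ∧
    Tendsto (fun n => kernelV μ K (fun x => gn n x / g x)) atTop (nhds 0) :=
  stmt15_general μ K hK hsymm ε M hε hε1 g hg hgb hL hV En hEnMeas hEnMono hEnUnion hEnCut gn hgn
end

section
/- Let (E, μ), Π be as in the kernel setting, let 0 < ε ≤ 1 ≤ M, and let g and g_n (n ≥ 1) be measurable functions on E with ε ≤ g ≤ M and ε ≤ g_n ≤ M for all n, and with L(g) < ∞ and V(g) < ∞. If L(g_n/g) → 0 and V(g_n/g) → 0 as n → ∞, then L(g_n) → L(g) and V(g_n) → V(g). -/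
open MeasureTheory Filter
open scoped ENNReal

open Topology
open scoped NNReal

/-!
`L(g)^(1/3)` and `V(g)^(1/2)` are the `L³` and `L²` seminorms of `g - 1` and of
`(x, y) ↦ g x - g y` for the measures `Π(x,x) dμ(x)` and `|Π(x,y)|² dμ(x) dμ(y)`, so by Minkowski
it suffices that the seminorms of the differences tend to `0`. For `L`,
`|gₙ - g| = g |gₙ/g - 1| ≤ M |gₙ/g - 1|`. For `V`, with `q = gₙ/g`,
`gₙ x - gₙ y - (g x - g y) = (g x - g y) (q x - 1) + g y (q x - q y)`. The second term is
controlled by `V(q)`; the square of the first is at most `t² |g x - g y|² + (M²/t) |q x - 1|³`,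
and by the reproducing property the last term integrates to `(M²/t) L(q)`. Letting `n → ∞` and
then `t → 0` kills the first term too.
-/

lemma sq_mul_sq_le_of_le {a b M t : ℝ} (ha : 0 ≤ a) (haM : a ≤ M) (hb : 0 ≤ b) (ht : 0 < t) :
    a ^ 2 * b ^ 2 ≤ t ^ 2 * a ^ 2 + M ^ 2 / t * b ^ 3 := by
  have hb2 : b ^ 2 ≤ t ^ 2 + b ^ 3 / t := by
    rcases le_total b t with hbt | hbt
    · nlinarith [div_nonneg (pow_nonneg hb 3) ht.le]
    · have : b ^ 2 ≤ b ^ 3 / t := by rw [le_div_iff₀ ht]; nlinarith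
      nlinarith
  have ha2 : a ^ 2 ≤ M ^ 2 := pow_le_pow_left₀ ha haM 2
  calc a ^ 2 * b ^ 2 ≤ a ^ 2 * (t ^ 2 + b ^ 3 / t) := by gcongr
    _ ≤ t ^ 2 * a ^ 2 + M ^ 2 * (b ^ 3 / t) := by nlinarith [div_nonneg (pow_nonneg hb 3) ht.le]
    _ = t ^ 2 * a ^ 2 + M ^ 2 / t * b ^ 3 := by ring

namespace ENNReal

lemma tendsto_of_le_add_of_le_add {ι : Type*} {l : Filter ι} {a d : ι → ℝ≥0∞} {A : ℝ≥0∞}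
    (hA : A ≠ ∞) (hd : Tendsto d l (𝓝 0)) (hup : ∀ i, a i ≤ A + d i)
    (hlow : ∀ i, A ≤ a i + d i) : Tendsto a l (𝓝 A) := by
  have hsub : Tendsto (fun i => A - d i) l (𝓝 A) := by
    simpa using ENNReal.Tendsto.sub tendsto_const_nhds hd (Or.inl hA)
  have hadd : Tendsto (fun i => A + d i) l (𝓝 A) := by
    simpa using tendsto_const_nhds.add hd
  exact tendsto_of_tendsto_of_tendsto_of_le_of_le hsub hadd
    (fun i => tsub_le_iff_right.2 (hlow i)) hup

lemma tendsto_nhds_zero_of_forall_le_add {ι : Type*} {l : Filter ι} {a e : ι → ℝ≥0∞}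
    {C : ℝ≥0∞} (hC : C ≠ ∞) (he : Tendsto e l (𝓝 0))
    (h : ∀ δ : ℝ, 0 < δ → ∃ c ≠ ∞, ∀ i, a i ≤ ENNReal.ofReal δ * C + c * e i) :
    Tendsto a l (𝓝 0) := by
  rw [ENNReal.tendsto_nhds_zero]
  intro ε hε
  have hε2 : 0 < ε / 2 := ENNReal.half_pos hε.ne'
  have hδC : Tendsto (fun δ : ℝ => ENNReal.ofReal δ * C) (𝓝[>] 0) (𝓝 0) := by
    simpa using (Tendsto.mul_const (ENNReal.tendsto_ofReal tendsto_id) (Or.inr hC)).mono_left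
      (nhdsWithin_le_nhds (a := (0 : ℝ)))
  obtain ⟨δ, hδC, hδ⟩ := ((hδC.eventually (gt_mem_nhds hε2)).and self_mem_nhdsWithin).exists
  obtain ⟨c, hc, hac⟩ := h δ hδ
  have hce : Tendsto (fun i => c * e i) l (𝓝 0) := by
    simpa using ENNReal.Tendsto.const_mul he (Or.inr hc)
  filter_upwards [hce.eventually (gt_mem_nhds hε2)] with i hi
  calc a i ≤ ENNReal.ofReal δ * C + c * e i := hac i
    _ ≤ ε / 2 + ε / 2 := add_le_add hδC.le hi.le
    _ = ε := ENNReal.add_halves ε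

lemma tendsto_nhds_zero_of_tendsto_pow {ι : Type*} {l : Filter ι} {a : ι → ℝ≥0∞} {k : ℕ}
    (hk : k ≠ 0) (h : Tendsto (fun i => a i ^ k) l (𝓝 0)) : Tendsto a l (𝓝 0) := by
  have := ((ENNReal.continuous_rpow_const (y := (k : ℝ)⁻¹)).tendsto 0).comp h
  simpa [Function.comp_def, ← ENNReal.rpow_natCast, ← ENNReal.rpow_mul, hk,
    ENNReal.zero_rpow_of_pos (inv_pos.2 (Nat.cast_pos.2 (Nat.pos_of_ne_zero hk)))] using this

end ENNReal

section LpSeminorm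

variable {α : Type*} [MeasurableSpace α]

lemma lintegral_ofReal_abs_pow_mul_eq_eLpNorm_pow (μ : Measure α) {w : α → ℝ}
    (hw : Measurable w) (f : α → ℝ) {k : ℕ} (hk : k ≠ 0) :
    ∫⁻ x, ENNReal.ofReal (|f x| ^ k * w x) ∂μ
      = eLpNorm f k (μ.withDensity fun x => ENNReal.ofReal (w x)) ^ k := by
  have hk' : (k : ℝ≥0) ≠ 0 := by exact_mod_cast hk
  have h := eLpNorm_nnreal_pow_eq_lintegral (f := f)
    (μ := μ.withDensity fun x => ENNReal.ofReal (w x)) hk'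
  simp only [ENNReal.coe_natCast, NNReal.coe_natCast, ENNReal.rpow_natCast] at h
  rw [h, lintegral_withDensity_eq_lintegral_mul_non_measurable _
    (f := fun x => ENNReal.ofReal (w x)) (ENNReal.measurable_ofReal.comp hw)
    (ae_of_all _ fun _ => ENNReal.ofReal_lt_top)]
  refine lintegral_congr fun x => ?_
  rw [ENNReal.ofReal_mul (by positivity), ENNReal.ofReal_pow (abs_nonneg _),
    ← Real.enorm_eq_ofReal_abs, Pi.mul_apply, mul_comm]

lemma tendsto_eLpNorm_of_eLpNorm_sub_le {E : Type*} [NormedAddCommGroup E] {μ : Measure α}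
    {p : ℝ≥0∞} (hp : 1 ≤ p) {f : α → E} {fs : ℕ → α → E} {d : ℕ → ℝ≥0∞}
    (hf : AEStronglyMeasurable f μ) (hfs : ∀ n, AEStronglyMeasurable (fs n) μ)
    (hfin : eLpNorm f p μ ≠ ∞) (hd : Tendsto d atTop (𝓝 0))
    (h : ∀ n, eLpNorm (fs n - f) p μ ≤ d n) :
    Tendsto (fun n => eLpNorm (fs n) p μ) atTop (𝓝 (eLpNorm f p μ)) := by
  refine ENNReal.tendsto_of_le_add_of_le_add hfin hd (fun n => ?_) (fun n => ?_)
  · calc eLpNorm (fs n) p μ = eLpNorm (f + (fs n - f)) p μ := by rw [add_sub_cancel]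
      _ ≤ eLpNorm f p μ + eLpNorm (fs n - f) p μ := eLpNorm_add_le hf ((hfs n).sub hf) hp
      _ ≤ eLpNorm f p μ + d n := by gcongr; exact h n
  · calc eLpNorm f p μ = eLpNorm (fs n - (fs n - f)) p μ := by rw [sub_sub_cancel]
      _ ≤ eLpNorm (fs n) p μ + eLpNorm (fs n - f) p μ := eLpNorm_sub_le (hfs n) ((hfs n).sub hf) hp
      _ ≤ eLpNorm (fs n) p μ + d n := by gcongr; exact h n

variable {μ : Measure α} {p : ℝ≥0∞} {M : ℝ} {f g : α → ℝ}

lemma eLpNorm_sub_le_mul_eLpNorm_div_sub_one (hg : ∀ x, 0 < g x ∧ g x ≤ M) :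
    eLpNorm (f - g) p μ ≤ ENNReal.ofReal M * eLpNorm (fun x => f x / g x - 1) p μ := by
  refine eLpNorm_le_mul_eLpNorm_of_ae_le_mul (ae_of_all _ fun x => ?_) p
  have hfg : f x - g x = g x * (f x / g x - 1) := by field_simp [(hg x).1.ne']
  rw [Pi.sub_apply, hfg, Real.norm_eq_abs, Real.norm_eq_abs, abs_mul, abs_of_pos (hg x).1]
  exact mul_le_mul_of_nonneg_right (hg x).2 (abs_nonneg _)

lemma eLpNorm_diff_sub_diff_le {ν : Measure (α × α)} (hp : 1 ≤ p) (hf : Measurable f)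
    (hg : Measurable g) (hgM : ∀ x, 0 < g x ∧ g x ≤ M) :
    eLpNorm ((fun z : α × α => f z.1 - f z.2) - fun z => g z.1 - g z.2) p ν
      ≤ eLpNorm (fun z : α × α => (g z.1 - g z.2) * (f z.1 / g z.1 - 1)) p ν
        + ENNReal.ofReal M * eLpNorm (fun z : α × α => f z.1 / g z.1 - f z.2 / g z.2) p ν := by
  have hsplit : ((fun z : α × α => f z.1 - f z.2) - fun z => g z.1 - g z.2)
      = (fun z : α × α => (g z.1 - g z.2) * (f z.1 / g z.1 - 1))
        + fun z => g z.2 * (f z.1 / g z.1 - f z.2 / g z.2) := by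
    funext z
    simp only [Pi.sub_apply, Pi.add_apply]
    field_simp [(hgM z.1).1.ne', (hgM z.2).1.ne']
    ring
  rw [hsplit]
  refine (eLpNorm_add_le (by fun_prop) (by fun_prop) hp).trans (add_le_add le_rfl ?_)
  refine eLpNorm_le_mul_eLpNorm_of_ae_le_mul (ae_of_all _ fun z => ?_) p
  rw [norm_mul, Real.norm_of_nonneg (hgM z.2).1.le]
  exact mul_le_mul_of_nonneg_right (hgM z.2).2 (norm_nonneg _)

end LpSeminorm

section Kernel

variable {E : Type*} [MeasurableSpace E] (μ : Measure E) (K : E → E → ℂ)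

noncomputable def diagonalMeasure : Measure E :=
  μ.withDensity fun x => ENNReal.ofReal (K x x).re

noncomputable def kernelSqMeasure : Measure (E × E) :=
  (μ.prod μ).withDensity fun p => ENNReal.ofReal (‖K p.1 p.2‖ ^ 2)

variable {μ K}

lemma measurable_re_diag (hK : Measurable (Function.uncurry K)) :
    Measurable fun x => (K x x).re :=
  Complex.measurable_re.comp (hK.comp (measurable_id.prodMk measurable_id))

lemma measurable_norm_sq (hK : Measurable (Function.uncurry K)) :
    Measurable fun p : E × E => ‖K p.1 p.2‖ ^ 2 :=
  (continuous_norm.measurable.comp hK).pow_const 2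

lemma kernelL_eq_eLpNorm_pow (hK : Measurable (Function.uncurry K)) (g : E → ℝ) :
    kernelL μ K g = eLpNorm (fun x => g x - 1) 3 (diagonalMeasure μ K) ^ 3 :=
  lintegral_ofReal_abs_pow_mul_eq_eLpNorm_pow μ (measurable_re_diag hK) _ three_ne_zero

lemma kernelV_eq_eLpNorm_pow (hK : Measurable (Function.uncurry K)) (g : E → ℝ) :
    kernelV μ K g = eLpNorm (fun p : E × E => g p.1 - g p.2) 2 (kernelSqMeasure μ K) ^ 2 :=
  lintegral_ofReal_abs_pow_mul_eq_eLpNorm_pow _ (measurable_norm_sq hK) _ two_ne_zero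

lemma lintegral_prod_mul_norm_sq_eq [SFinite μ] (hK : Measurable (Function.uncurry K))
    (hrepr : ∀ᵐ x ∂μ, ENNReal.ofReal ((K x x).re) = ∫⁻ y, ENNReal.ofReal (‖K x y‖ ^ 2) ∂μ)
    {F : E → ℝ≥0∞} (hF : Measurable F) :
    ∫⁻ p : E × E, F p.1 * ENNReal.ofReal (‖K p.1 p.2‖ ^ 2) ∂(μ.prod μ)
      = ∫⁻ x, F x * ENNReal.ofReal (K x x).re ∂μ := by
  have hKsq := measurable_norm_sq hK
  have hKx : ∀ x, Measurable fun y => ENNReal.ofReal (‖K x y‖ ^ 2) := fun x =>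
    ENNReal.measurable_ofReal.comp (hKsq.comp measurable_prodMk_left)
  rw [lintegral_prod _ (by fun_prop)]
  refine lintegral_congr_ae ?_
  filter_upwards [hrepr] with x hx
  rw [lintegral_const_mul _ (hKx x), hx]

lemma lintegral_cross_term_le [SFinite μ] (hK : Measurable (Function.uncurry K))
    (hrepr : ∀ᵐ x ∂μ, ENNReal.ofReal ((K x x).re) = ∫⁻ y, ENNReal.ofReal (‖K x y‖ ^ 2) ∂μ)
    {M t : ℝ} (ht : 0 < t) {u w : E → ℝ} (hu : ∀ x y, |u x - u y| ≤ M) (hw : Measurable w) :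
    ∫⁻ p : E × E, ENNReal.ofReal (|(u p.1 - u p.2) * (w p.1 - 1)| ^ 2 * ‖K p.1 p.2‖ ^ 2)
        ∂(μ.prod μ)
      ≤ ENNReal.ofReal (t ^ 2) * kernelV μ K u + ENNReal.ofReal (M ^ 2 / t) * kernelL μ K w := by
  have hW : Measurable fun x => ENNReal.ofReal (|w x - 1| ^ 3) := by fun_prop
  have hKsq := measurable_norm_sq hK
  calc _ ≤ ∫⁻ p : E × E, ENNReal.ofReal (t ^ 2) *
          ENNReal.ofReal (|u p.1 - u p.2| ^ 2 * ‖K p.1 p.2‖ ^ 2) + ENNReal.ofReal (M ^ 2 / t) *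
          (ENNReal.ofReal (|w p.1 - 1| ^ 3) * ENNReal.ofReal (‖K p.1 p.2‖ ^ 2)) ∂(μ.prod μ) := by
        refine lintegral_mono fun p => ?_
        have h := sq_mul_sq_le_of_le (abs_nonneg (u p.1 - u p.2)) (hu p.1 p.2)
          (abs_nonneg (w p.1 - 1)) ht
        rw [← ENNReal.ofReal_mul (by positivity), ← ENNReal.ofReal_mul (by positivity),
          ← ENNReal.ofReal_mul (by positivity), ← ENNReal.ofReal_add (by positivity)
          (by positivity)]
        refine ENNReal.ofReal_le_ofReal ?_
        rw [abs_mul, mul_pow]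
        nlinarith [mul_le_mul_of_nonneg_right h (sq_nonneg ‖K p.1 p.2‖)]
    _ = ENNReal.ofReal (t ^ 2) * kernelV μ K u + ENNReal.ofReal (M ^ 2 / t) *
          ∫⁻ x, ENNReal.ofReal (|w x - 1| ^ 3) * ENNReal.ofReal (K x x).re ∂μ := by
        rw [lintegral_add_right _ (by fun_prop),
          lintegral_const_mul' _ _ ENNReal.ofReal_ne_top,
          lintegral_const_mul' _ _ ENNReal.ofReal_ne_top, lintegral_prod_mul_norm_sq_eq hK hrepr hW]
        rfl
    _ = _ := by
        simp only [kernelL, ENNReal.ofReal_mul (pow_nonneg (abs_nonneg _) 3)]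

lemma tendsto_eLpNorm_cross_term [SFinite μ] (hK : Measurable (Function.uncurry K))
    (hrepr : ∀ᵐ x ∂μ, ENNReal.ofReal ((K x x).re) = ∫⁻ y, ENNReal.ofReal (‖K x y‖ ^ 2) ∂μ)
    {M : ℝ} {u : E → ℝ} (hu : ∀ x y, |u x - u y| ≤ M) (hV : kernelV μ K u ≠ ∞)
    {w : ℕ → E → ℝ} (hw : ∀ n, Measurable (w n))
    (hLw : Tendsto (fun n => kernelL μ K (w n)) atTop (𝓝 0)) :
    Tendsto (fun n => eLpNorm (fun p : E × E => (u p.1 - u p.2) * (w n p.1 - 1)) 2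
      (kernelSqMeasure μ K)) atTop (𝓝 0) := by
  have hsq : ∀ n, eLpNorm (fun p : E × E => (u p.1 - u p.2) * (w n p.1 - 1)) 2
      (kernelSqMeasure μ K) ^ 2 = ∫⁻ p : E × E,
        ENNReal.ofReal (|(u p.1 - u p.2) * (w n p.1 - 1)| ^ 2 * ‖K p.1 p.2‖ ^ 2) ∂(μ.prod μ) :=
    fun n => (lintegral_ofReal_abs_pow_mul_eq_eLpNorm_pow _ (measurable_norm_sq hK) _
      two_ne_zero).symm
  refine ENNReal.tendsto_nhds_zero_of_tendsto_pow two_ne_zero ?_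
  simp_rw [hsq]
  refine ENNReal.tendsto_nhds_zero_of_forall_le_add hV hLw fun δ hδ =>
    ⟨ENNReal.ofReal (M ^ 2 / √δ), ENNReal.ofReal_ne_top, fun n => ?_⟩
  simpa [Real.sq_sqrt hδ.le] using lintegral_cross_term_le hK hrepr (Real.sqrt_pos.2 hδ) hu (hw n)

end Kernel

theorem stmt16_general {E : Type*} [MeasurableSpace E] (μ : Measure E) [SigmaFinite μ]
    (K : E → E → ℂ) (hK : Measurable (Function.uncurry K))
    (hrepr : ∀ᵐ x ∂μ, ENNReal.ofReal ((K x x).re) =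
      ∫⁻ y, ENNReal.ofReal (‖K x y‖ ^ 2) ∂μ)
    (ε M : ℝ) (hε : 0 < ε)
    (g : E → ℝ) (hg : Measurable g) (hgb : ∀ x, ε ≤ g x ∧ g x ≤ M)
    (gn : ℕ → E → ℝ) (hgn : ∀ n, Measurable (gn n))
    (hL : kernelL μ K g < ⊤) (hV : kernelV μ K g < ⊤)
    (hLq : Tendsto (fun n => kernelL μ K (fun x => gn n x / g x)) atTop (nhds 0))
    (hVq : Tendsto (fun n => kernelV μ K (fun x => gn n x / g x)) atTop (nhds 0)) :
    Tendsto (fun n => kernelL μ K (gn n)) atTop (nhds (kernelL μ K g)) ∧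
    Tendsto (fun n => kernelV μ K (gn n)) atTop (nhds (kernelV μ K g)) := by
  have hgM : ∀ x, 0 < g x ∧ g x ≤ M := fun x => ⟨hε.trans_le (hgb x).1, (hgb x).2⟩
  have hq : ∀ n, Measurable fun x => gn n x / g x := fun n => (hgn n).div hg
  have hcross := tendsto_eLpNorm_cross_term hK hrepr
    (fun x y => abs_sub_le_of_nonneg_of_le (hgM x).1.le (hgM x).2 (hgM y).1.le (hgM y).2)
    hV.ne hq hLq
  simp only [kernelL_eq_eLpNorm_pow hK, kernelV_eq_eLpNorm_pow hK, ENNReal.pow_lt_top_iff,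
    OfNat.ofNat_ne_zero, or_false] at hL hV hLq hVq ⊢
  constructor
  · have hd := ENNReal.Tendsto.const_mul
      (ENNReal.tendsto_nhds_zero_of_tendsto_pow three_ne_zero hLq)
      (Or.inr (ENNReal.ofReal_ne_top (r := M)))
    rw [mul_zero] at hd
    refine ((ENNReal.continuous_pow 3).tendsto _).comp
      (tendsto_eLpNorm_of_eLpNorm_sub_le (by norm_num) (by fun_prop) (fun n => by fun_prop)
        hL.ne hd fun n => ?_)
    rw [show ((fun x => gn n x - 1) - fun x => g x - 1) = gn n - g from
      funext fun x => sub_sub_sub_cancel_right _ _ _]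
    exact eLpNorm_sub_le_mul_eLpNorm_div_sub_one hgM
  · have hd := hcross.add (ENNReal.Tendsto.const_mul
      (ENNReal.tendsto_nhds_zero_of_tendsto_pow two_ne_zero hVq)
      (Or.inr (ENNReal.ofReal_ne_top (r := M))))
    rw [mul_zero, add_zero] at hd
    exact ((ENNReal.continuous_pow 2).tendsto _).comp
      (tendsto_eLpNorm_of_eLpNorm_sub_le one_le_two (by fun_prop) (fun n => by fun_prop)
        hV.ne hd fun n => eLpNorm_diff_sub_diff_le one_le_two (hgn n) hg hgM)

/-- In the kernel setting, if `ε ≤ g, g_n ≤ M` (uniformly), `L(g) < ∞`,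
`V(g) < ∞`, and `L(g_n/g) → 0`, `V(g_n/g) → 0`, then `L(g_n) → L(g)` and
`V(g_n) → V(g)`. -/
theorem stmt16 {E : Type*} [MeasurableSpace E] (μ : Measure E) [SigmaFinite μ]
    (K : E → E → ℂ) (hK : Measurable (Function.uncurry K))
    (hsymm : ∀ x y, K y x = (starRingEnd ℂ) (K x y))
    (hrepr : ∀ᵐ x ∂μ, ENNReal.ofReal ((K x x).re) =
      ∫⁻ y, ENNReal.ofReal (‖K x y‖ ^ 2) ∂μ)
    (ε M : ℝ) (hε : 0 < ε) (hε1 : ε ≤ 1) (hM : 1 ≤ M)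
    (g : E → ℝ) (hg : Measurable g) (hgb : ∀ x, ε ≤ g x ∧ g x ≤ M)
    (gn : ℕ → E → ℝ) (hgn : ∀ n, Measurable (gn n))
    (hgnb : ∀ n x, ε ≤ gn n x ∧ gn n x ≤ M)
    (hL : kernelL μ K g < ⊤) (hV : kernelV μ K g < ⊤)
    (hLq : Tendsto (fun n => kernelL μ K (fun x => gn n x / g x)) atTop (nhds 0))
    (hVq : Tendsto (fun n => kernelV μ K (fun x => gn n x / g x)) atTop (nhds 0)) :
    Tendsto (fun n => kernelL μ K (gn n)) atTop (nhds (kernelL μ K g)) ∧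
    Tendsto (fun n => kernelV μ K (gn n)) atTop (nhds (kernelV μ K g)) :=
  stmt16_general μ K hK hrepr ε M hε g hg hgb gn hgn hL hV hLq hVq
end

section
/- Let ψ: ℂ → ℝ be continuous and let q₁,…,q_ℓ be distinct points of ℂ. Then there exist ε > 0 and C > 0 such that for every entire function f with ∫_ℂ |f(z)|² e^{−2ψ(z)} dλ(z) ≤ 1 and f(q₁) = ⋯ = f(q_ℓ) = 0, for every k ∈ {1,…,ℓ} and every z with |z − q_k| ≤ ε, one has |f(z)|² ≤ C |z − q_k|². -/
/-!
Let `M` bound `ψ` from above on the compact union of the discs of radius `2` around the `q k`.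
Since `|f|²` has the sub-mean-value property on discs and `e^{-2ψ} ≥ e^{-2M}` there, integrating
over unit discs bounds `|f|²` by `e^{2M}/π` on `ball (q k) 1`, uniformly over the unit ball of
`𝓕_ψ`. As `f (q k) = 0`, the Schwarz lemma turns this into `|f z| ≤ (e^M/√π) |z - q k|`.
-/

open MeasureTheory Metric Set Real
open scoped ENNReal

lemma norm_circleAverage_le {E : Type*} [NormedAddCommGroup E] [NormedSpace ℝ E]
    (f : ℂ → E) (c : ℂ) (R : ℝ) :
    ‖circleAverage f c R‖ ≤ circleAverage (fun z ↦ ‖f z‖) c R := by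
  simp only [circleAverage_def, norm_smul, smul_eq_mul, norm_inv, Real.norm_eq_abs,
    abs_of_pos two_pi_pos]
  gcongr
  exact intervalIntegral.norm_integral_le_integral_norm two_pi_pos.le

lemma DiffContOnCl.norm_pow_le_circleAverage {f : ℂ → ℂ} {c : ℂ} {R : ℝ}
    (hf : DiffContOnCl ℂ f (ball c |R|)) (n : ℕ) :
    ‖f c‖ ^ n ≤ Real.circleAverage (fun z ↦ ‖f z‖ ^ n) c R := by
  have hfn : DiffContOnCl ℂ (fun z ↦ f z ^ n) (ball c |R|) :=
    ⟨hf.differentiableOn.pow n, hf.continuousOn.pow n⟩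
  simpa only [hfn.circleAverage, norm_pow] using norm_circleAverage_le (fun z ↦ f z ^ n) c R

lemma setLIntegral_closedBall_eq_lintegral_circleMap {g : ℂ → ℝ≥0∞} (hg : Measurable g)
    (c : ℂ) (R : ℝ) :
    ∫⁻ z in closedBall c R, g z =
      ∫⁻ r in Ioc 0 R, ENNReal.ofReal r * ∫⁻ θ in Ioo (-π) π, g (circleMap c r θ) := by
  set G : ℝ × ℝ → ℝ≥0∞ := fun p ↦ ENNReal.ofReal p.1 * g (circleMap c p.1 p.2)
  have hpolar : ∀ p ∈ Complex.polarCoord.target,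
      ENNReal.ofReal p.1 • (closedBall c R).indicator g (Complex.polarCoord.symm p + c) =
        (Ioc 0 R ×ˢ Ioo (-π) π).indicator G p := by
    rintro ⟨r, θ⟩ ⟨hr : 0 < r, hθ⟩
    have hcirc : Complex.polarCoord.symm (r, θ) + c = circleMap c r θ := by
      simp [circleMap, Complex.exp_mul_I, add_comm]
    by_cases hrR : r ≤ R
    · rw [hcirc, indicator_of_mem, indicator_of_mem]
      · rfl
      · exact ⟨⟨hr, hrR⟩, hθ⟩
      · rwa [mem_closedBall, dist_eq_norm, circleMap_sub_center, norm_circleMap_zero,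
          abs_of_pos hr]
    · rw [indicator_of_notMem, indicator_of_notMem, smul_zero]
      · exact fun h ↦ hrR h.1.2
      · rwa [hcirc, mem_closedBall, dist_eq_norm, circleMap_sub_center, norm_circleMap_zero,
          abs_of_pos hr]
  have hG : Measurable G :=
    measurable_fst.ennreal_ofReal.mul (hg.comp circleMap.continuous.measurable)
  calc ∫⁻ z in closedBall c R, g z
      = ∫⁻ z, (closedBall c R).indicator g (z + c) := by
        rw [lintegral_add_right_eq_self, lintegral_indicator measurableSet_closedBall]
    _ = ∫⁻ p in Complex.polarCoord.target, (Ioc 0 R ×ˢ Ioo (-π) π).indicator G p := by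
        rw [← Complex.lintegral_comp_polarCoord_symm]
        exact setLIntegral_congr_fun Complex.polarCoord.open_target.measurableSet hpolar
    _ = ∫⁻ p in Ioc 0 R ×ˢ Ioo (-π) π, G p := by
        rw [lintegral_indicator (measurableSet_Ioc.prod measurableSet_Ioo),
          Measure.restrict_restrict (measurableSet_Ioc.prod measurableSet_Ioo),
          Complex.polarCoord_target, inter_eq_left.2 (prod_mono Ioc_subset_Ioi_self subset_rfl)]
    _ = _ := by
        rw [Measure.volume_eq_prod, setLIntegral_prod _ hG.aemeasurable]
        simp only [G]
        exact lintegral_congr fun r ↦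
          lintegral_const_mul _ (hg.comp (continuous_circleMap c r).measurable)

lemma lintegral_Ioo_circleMap_eq_ofReal_circleAverage {u : ℂ → ℝ} (hu : Continuous u)
    (hu0 : ∀ z, 0 ≤ u z) (c : ℂ) (r : ℝ) :
    ∫⁻ θ in Ioo (-π) π, ENNReal.ofReal (u (circleMap c r θ)) =
      ENNReal.ofReal (2 * π * circleAverage u c r) := by
  have hcont : Continuous fun θ ↦ u (circleMap c r θ) := hu.comp (continuous_circleMap c r)
  rw [← ofReal_integral_eq_lintegral_ofReal (hcont.integrableOn_Icc.mono_set Ioo_subset_Icc_self)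
    (ae_of_all _ fun θ ↦ hu0 _), circleAverage_eq_integral_add (-π), smul_eq_mul,
    mul_inv_cancel_left₀ two_pi_pos.ne', intervalIntegral.integral_comp_add_right
      (fun θ ↦ u (circleMap c r θ)), intervalIntegral.integral_of_le (by linarith [pi_pos]),
    integral_Ioc_eq_integral_Ioo]
  ring_nf

lemma ofReal_mul_le_setLIntegral_closedBall {u : ℂ → ℝ} (hu : Continuous u) (hu0 : ∀ z, 0 ≤ u z)
    {c : ℂ} {R : ℝ} (hR : 0 ≤ R) (hsub : ∀ r ∈ Ioc 0 R, u c ≤ circleAverage u c r) :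
    ENNReal.ofReal (π * R ^ 2 * u c) ≤ ∫⁻ z in closedBall c R, ENNReal.ofReal (u z) := by
  have hcircle : ∀ r ∈ Ioc 0 R, ENNReal.ofReal (r * (2 * π * u c)) ≤
      ENNReal.ofReal r * ∫⁻ θ in Ioo (-π) π, ENNReal.ofReal (u (circleMap c r θ)) := by
    intro r hr
    rw [lintegral_Ioo_circleMap_eq_ofReal_circleAverage hu hu0, ← ENNReal.ofReal_mul hr.1.le]
    gcongr
    exacts [hr.1.le, hsub r hr]
  calc ENNReal.ofReal (π * R ^ 2 * u c)
      = ∫⁻ r in Ioc 0 R, ENNReal.ofReal (r * (2 * π * u c)) := by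
        rw [← ofReal_integral_eq_lintegral_ofReal, integral_mul_const,
          ← intervalIntegral.integral_of_le hR, integral_id]
        · ring_nf
        · exact (continuous_id.mul continuous_const).integrableOn_Icc.mono_set Ioc_subset_Icc_self
        · filter_upwards [ae_restrict_mem measurableSet_Ioc] with r hr
          exact mul_nonneg hr.1.le (mul_nonneg two_pi_pos.le (hu0 c))
    _ ≤ ∫⁻ r in Ioc 0 R,
          ENNReal.ofReal r * ∫⁻ θ in Ioo (-π) π, ENNReal.ofReal (u (circleMap c r θ)) :=
        setLIntegral_mono' measurableSet_Ioc hcircle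
    _ = ∫⁻ z in closedBall c R, ENNReal.ofReal (u z) :=
        (setLIntegral_closedBall_eq_lintegral_circleMap
          (ENNReal.measurable_ofReal.comp hu.measurable) c R).symm

lemma Differentiable.ofReal_mul_norm_pow_le_setLIntegral_closedBall {f : ℂ → ℂ}
    (hf : Differentiable ℂ f) (n : ℕ) (c : ℂ) {R : ℝ} (hR : 0 ≤ R) :
    ENNReal.ofReal (π * R ^ 2 * ‖f c‖ ^ n) ≤
      ∫⁻ z in closedBall c R, ENNReal.ofReal (‖f z‖ ^ n) :=
  ofReal_mul_le_setLIntegral_closedBall (hf.continuous.norm.pow n)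
    (fun z ↦ pow_nonneg (norm_nonneg (f z)) n) hR
    fun _ _ ↦ hf.diffContOnCl.norm_pow_le_circleAverage n

lemma Differentiable.sq_norm_le_of_lintegral_weighted_le_one {f : ℂ → ℂ}
    (hf : Differentiable ℂ f) {ψ : ℂ → ℝ} (hint : ∫⁻ z, ENNReal.ofReal (‖f z‖ ^ 2 * Real.exp (-2 * ψ z)) ≤ 1)
    {c : ℂ} {R M : ℝ} (hR : 0 < R) (hψ : ∀ z ∈ closedBall c R, ψ z ≤ M) :
    ‖f c‖ ^ 2 ≤ Real.exp (2 * M) / (π * R ^ 2) := by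
  have hweight : ∀ z ∈ closedBall c R, ENNReal.ofReal (‖f z‖ ^ 2) ≤
      ENNReal.ofReal (Real.exp (2 * M)) * ENNReal.ofReal (‖f z‖ ^ 2 * Real.exp (-2 * ψ z)) := by
    intro z hz
    rw [← ENNReal.ofReal_mul (Real.exp_pos _).le]
    gcongr
    have : 1 ≤ Real.exp (2 * M) * Real.exp (-2 * ψ z) := by
      rw [← Real.exp_add]
      exact Real.one_le_exp (by linarith [hψ z hz])
    nlinarith [sq_nonneg ‖f z‖]
  have hbound : ENNReal.ofReal (π * R ^ 2 * ‖f c‖ ^ 2) ≤ ENNReal.ofReal (Real.exp (2 * M)) :=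
    calc ENNReal.ofReal (π * R ^ 2 * ‖f c‖ ^ 2)
        ≤ ∫⁻ z in closedBall c R, ENNReal.ofReal (‖f z‖ ^ 2) :=
          hf.ofReal_mul_norm_pow_le_setLIntegral_closedBall 2 c hR.le
      _ ≤ ∫⁻ z in closedBall c R,
            ENNReal.ofReal (Real.exp (2 * M)) * ENNReal.ofReal (‖f z‖ ^ 2 * Real.exp (-2 * ψ z)) :=
          setLIntegral_mono' measurableSet_closedBall hweight
      _ ≤ ENNReal.ofReal (Real.exp (2 * M)) *
            ∫⁻ z, ENNReal.ofReal (‖f z‖ ^ 2 * Real.exp (-2 * ψ z)) := by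
          rw [lintegral_const_mul' _ _ ENNReal.ofReal_ne_top]
          exact mul_le_mul_right (setLIntegral_le_lintegral _ _) _
      _ ≤ ENNReal.ofReal (Real.exp (2 * M)) := mul_le_of_le_one_right' hint
  rw [le_div_iff₀ (by positivity), mul_comm]
  exact (ENNReal.ofReal_le_ofReal_iff (Real.exp_pos _).le).1 hbound

theorem stmt17_general (ψ : ℂ → ℝ) (hψ : Continuous ψ) (ℓ : ℕ) (q : Fin ℓ → ℂ) :
    ∃ ε > (0 : ℝ), ∃ C > (0 : ℝ), ∀ f : ℂ → ℂ, Differentiable ℂ f →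
      (∫⁻ z : ℂ, ENNReal.ofReal (‖f z‖ ^ 2 * Real.exp (-2 * ψ z))) ≤ 1 →
      (∀ i, f (q i) = 0) →
      ∀ k : Fin ℓ, ∀ z : ℂ, ‖z - q k‖ ≤ ε →
        ‖f z‖ ^ 2 ≤ C * ‖z - q k‖ ^ 2 := by
  obtain ⟨M, hM⟩ :=
    ((isCompact_iUnion fun k ↦ isCompact_closedBall (q k) 2).image hψ).bddAbove
  set C := exp (2 * M) / π
  refine ⟨1 / 2, by norm_num, C, by positivity, fun f hf hint hvan k z hz ↦ ?_⟩
  have hbounded : MapsTo f (ball (q k) 1) (closedBall (f (q k)) √C) := by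
    intro w hw
    have hψ_le : ∀ y ∈ closedBall w 1, ψ y ≤ M := fun y hy ↦
      hM (mem_image_of_mem ψ (mem_iUnion.2 ⟨k, mem_closedBall.2 <| by
        linarith [dist_triangle y w (q k), mem_closedBall.1 hy, (mem_ball.1 hw).le]⟩))
    have hsq := hf.sq_norm_le_of_lintegral_weighted_le_one hint one_pos hψ_le
    rw [hvan k, mem_closedBall, dist_zero_right]
    exact le_sqrt_of_sq_le (by simpa using hsq)
  have hschwarz := Complex.dist_le_div_mul_dist_of_mapsTo_ball hf.differentiableOn hbounded
    (mem_ball_iff_norm.2 (by linarith))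
  rw [hvan k, dist_zero_right, div_one, dist_eq_norm] at hschwarz
  calc ‖f z‖ ^ 2 ≤ (√C * ‖z - q k‖) ^ 2 := pow_le_pow_left₀ (norm_nonneg _) hschwarz 2
    _ = C * ‖z - q k‖ ^ 2 := by rw [mul_pow, sq_sqrt (by positivity)]

/-- For continuous `ψ : ℂ → ℝ` and distinct points `q₁,…,q_ℓ`, there are
`ε > 0` and `C > 0` such that every entire `f` with `∫_ℂ |f|² e^(−2ψ) dλ ≤ 1` and
`f(qᵢ) = 0` for all `i` satisfies `|f(z)|² ≤ C |z − q_k|²` whenever `|z − q_k| ≤ ε`. -/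
theorem stmt17 (ψ : ℂ → ℝ) (hψ : Continuous ψ) (ℓ : ℕ) (q : Fin ℓ → ℂ)
    (hq : Function.Injective q) :
    ∃ ε > (0 : ℝ), ∃ C > (0 : ℝ), ∀ f : ℂ → ℂ, Differentiable ℂ f →
      (∫⁻ z : ℂ, ENNReal.ofReal (‖f z‖ ^ 2 * Real.exp (-2 * ψ z))) ≤ 1 →
      (∀ i, f (q i) = 0) →
      ∀ k : Fin ℓ, ∀ z : ℂ, ‖z - q k‖ ≤ ε →
        ‖f z‖ ^ 2 ≤ C * ‖z - q k‖ ^ 2 :=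
  stmt17_general ψ hψ ℓ q
end
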